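/- arXiv:2304.14528 — 9 statements merged into one kernel-verified Lean document; each statement's English description precedes it below -/
import Mathlib

section
/- In the graph G(m,n), every maximal independent set of vertices corresponds to a lattice path from x_{1,1} to x_{m,n}: if W is a maximal independent set containing x_{i,j} with (i,j) ≠ (m,n), then exactly one of x_{i+1,j} or x_{i,j+1} is also in W. -/
/-!
Suppose neither neighbour of `(i, j)` lies in `W`. By maximality each has a neighbour in `W`,
and since these are not adjacent to `(i, j)`, they must be of the form `(i, b)` with `b > j`
and `(c, j)` with `c > i`. But such two vertices are adjacent.
-/

/-- The graph `G(m,n)`: vertices are pairs `(i,j)` (0-indexed, corresponding to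
`x_{i+1,j+1}`), and `x_{i,j} ~ x_{k,l}` iff (`i < k` and `j > l`) or (`i > k` and `j < l`). -/
def gridGraph (m n : ℕ) : SimpleGraph (Fin m × Fin n) where
  Adj u v := (u.1 < v.1 ∧ v.2 < u.2) ∨ (v.1 < u.1 ∧ u.2 < v.2)
  symm := ⟨fun u v h => Or.symm h⟩
  loopless := ⟨fun u h => by rcases h with ⟨h, -⟩ | ⟨h, -⟩ <;> exact absurd h (lt_irrefl _)⟩

/-- `W` is an independent set of the induced subgraph of `G` on `A`. -/
def IndepOn {V : Type*} (G : SimpleGraph V) (A W : Set V) : Prop :=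
  W ⊆ A ∧ ∀ u ∈ W, ∀ v ∈ W, ¬ G.Adj u v

/-- `W` is a maximal independent set of the induced subgraph of `G` on `A`. -/
def MaxIndepOn {V : Type*} (G : SimpleGraph V) (A W : Set V) : Prop :=
  IndepOn G A W ∧ ∀ W', IndepOn G A W' → W ⊆ W' → W' = W

theorem MaxIndepOn.exists_adj_of_notMem {V : Type*} {G : SimpleGraph V} {A W : Set V}
    (hW : MaxIndepOn G A W) {v : V} (hvA : v ∈ A) (hvW : v ∉ W) : ∃ w ∈ W, G.Adj v w := by
  by_contra! h
  have hind : IndepOn G A (insert v W) := by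
    refine ⟨Set.insert_subset hvA hW.1.1, ?_⟩
    rintro u (rfl | hu) w (rfl | hw)
    · exact G.irrefl
    · exact h w hw
    · exact fun hadj => h u hu hadj.symm
    · exact hW.1.2 u hu w hw
  exact hvW (hW.2 _ hind (Set.subset_insert v W) ▸ Set.mem_insert v W)

namespace gridGraph

variable {m n : ℕ} {W : Set (Fin m × Fin n)} {i : Fin m} {j : Fin n}

theorem exists_mem_right_of_below_notMem (hW : MaxIndepOn (gridGraph m n) Set.univ W)
    (hij : (i, j) ∈ W) (hi : i.val + 1 < m) (hnot : (⟨i.val + 1, hi⟩, j) ∉ W) :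
    ∃ b, j < b ∧ (i, b) ∈ W := by
  obtain ⟨⟨a, b⟩, hw, hadj⟩ := hW.exists_adj_of_notMem (Set.mem_univ _) hnot
  have hnadj := hW.1.2 _ hij _ hw
  simp only [gridGraph, Fin.lt_def] at hadj hnadj
  have hai : a = i := by ext; omega
  exact ⟨b, by rw [Fin.lt_def]; omega, hai ▸ hw⟩

theorem exists_mem_below_of_right_notMem (hW : MaxIndepOn (gridGraph m n) Set.univ W)
    (hij : (i, j) ∈ W) (hj : j.val + 1 < n) (hnot : (i, ⟨j.val + 1, hj⟩) ∉ W) :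
    ∃ c, i < c ∧ (c, j) ∈ W := by
  obtain ⟨⟨c, d⟩, hw, hadj⟩ := hW.exists_adj_of_notMem (Set.mem_univ _) hnot
  have hnadj := hW.1.2 _ hij _ hw
  simp only [gridGraph, Fin.lt_def] at hadj hnadj
  have hdj : d = j := by ext; omega
  exact ⟨c, by rw [Fin.lt_def]; omega, hdj ▸ hw⟩

end gridGraph

theorem stmt0_general (m n : ℕ)
    (W : Set (Fin m × Fin n))
    (hW : MaxIndepOn (gridGraph m n) Set.univ W)
    (i : Fin m) (j : Fin n) (hmem : (i, j) ∈ W)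
    (hne : ¬ (i.1 = m - 1 ∧ j.1 = n - 1)) :
    Xor' (∃ h : i.1 + 1 < m, ((⟨i.1 + 1, h⟩ : Fin m), j) ∈ W)
         (∃ h : j.1 + 1 < n, (i, (⟨j.1 + 1, h⟩ : Fin n)) ∈ W) := by
  refine (xor_iff_or_and_not_and _ _).2 ⟨?_, ?_⟩
  · by_contra! hnone
    obtain ⟨hbelow, hright⟩ := hnone
    -- Either missing neighbour forces the other one to exist.
    have hboth : i.1 + 1 < m ∧ j.1 + 1 < n := by
      rcases (by omega : i.1 + 1 < m ∨ j.1 + 1 < n) with hi | hj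
      · obtain ⟨b, hjb, -⟩ :=
          gridGraph.exists_mem_right_of_below_notMem hW hmem hi (hbelow hi)
        exact ⟨hi, by rw [Fin.lt_def] at hjb; omega⟩
      · obtain ⟨c, hic, -⟩ :=
          gridGraph.exists_mem_below_of_right_notMem hW hmem hj (hright hj)
        exact ⟨by rw [Fin.lt_def] at hic; omega, hj⟩
    obtain ⟨b, hjb, hb⟩ :=
      gridGraph.exists_mem_right_of_below_notMem hW hmem hboth.1 (hbelow hboth.1)
    obtain ⟨c, hic, hc⟩ :=
      gridGraph.exists_mem_below_of_right_notMem hW hmem hboth.2 (hright hboth.2)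
    exact hW.1.2 _ hb _ hc (Or.inl ⟨hic, hjb⟩)
  · rintro ⟨⟨hi, hbelow⟩, ⟨hj, hright⟩⟩
    exact hW.1.2 _ hbelow _ hright (Or.inr ⟨Nat.lt_succ_self i.1, Nat.lt_succ_self j.1⟩)

/-- In `G(m,n)`, if `W` is a maximal independent set containing `x_{i,j}`
with `(i,j) ≠ (m,n)`, then exactly one of `x_{i+1,j}`, `x_{i,j+1}` is also in `W`. -/
theorem stmt0 (m n : ℕ) (hm : 1 ≤ m) (hn : 1 ≤ n)
    (W : Set (Fin m × Fin n))
    (hW : MaxIndepOn (gridGraph m n) Set.univ W)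
    (i : Fin m) (j : Fin n) (hmem : (i, j) ∈ W)
    (hne : ¬ (i.1 = m - 1 ∧ j.1 = n - 1)) :
    Xor' (∃ h : i.1 + 1 < m, ((⟨i.1 + 1, h⟩ : Fin m), j) ∈ W)
         (∃ h : j.1 + 1 < n, (i, (⟨j.1 + 1, h⟩ : Fin n)) ∈ W) :=
  stmt0_general m n W hW i j hmem hne
end

section
/- If W is a maximal independent set of G(m,n) containing x_{i,j} and x_{i,k} with j < k, then x_{i,ℓ} ∈ W for all j < ℓ < k; similarly if W contains x_{i,j} and x_{k,j} with i < k, then x_{ℓ,j} ∈ W for all i < ℓ < k. -/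
/-! Every neighbour of a vertex lying strictly between two vertices of the same row (or column)
is a neighbour of one of the two ends. So if both ends lie in an independent set, the middle
vertex has no neighbour in it, and by maximality it belongs to the set. -/

namespace MaxIndepOn

variable {V : Type*} {G : SimpleGraph V} {A W : Set V}

theorem exists_adj_of_notMem_s2 (hW : MaxIndepOn G A W) {v : V} (hvA : v ∈ A) (hvW : v ∉ W) :
    ∃ w ∈ W, G.Adj v w := by
  obtain ⟨⟨hWA, hind⟩, hmax⟩ := hW
  by_contra! hnone
  have hindep : IndepOn G A (insert v W) := by
    refine ⟨Set.insert_subset hvA hWA, ?_⟩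
    rintro a (rfl | ha) b (rfl | hb)
    · exact G.irrefl
    · exact hnone b hb
    · exact fun hab => hnone a ha hab.symm
    · exact hind a ha b hb
  exact hvW (hmax _ hindep (Set.subset_insert v W) ▸ Set.mem_insert v W)

theorem mem_of_forall_adj (hW : MaxIndepOn G A W) {v : V} (hvA : v ∈ A)
    (hv : ∀ w, G.Adj v w → ∃ u ∈ W, G.Adj u w) : v ∈ W := by
  by_contra hvW
  obtain ⟨w, hwW, hvw⟩ := hW.exists_adj_of_notMem_s2 hvA hvW
  obtain ⟨u, huW, huw⟩ := hv w hvw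
  exact hW.1.2 u huW w hwW huw

end MaxIndepOn

section gridGraph

variable {m n : ℕ}

theorem gridGraph_adj_of_adj_of_row_between {i : Fin m} {j k l : Fin n} (hjl : j < l)
    (hlk : l < k) {w : Fin m × Fin n} (h : (gridGraph m n).Adj (i, l) w) :
    (gridGraph m n).Adj (i, j) w ∨ (gridGraph m n).Adj (i, k) w := by
  rcases h with ⟨h1, h2⟩ | ⟨h1, h2⟩
  · exact Or.inr (Or.inl ⟨h1, h2.trans hlk⟩)
  · exact Or.inl (Or.inr ⟨h1, hjl.trans h2⟩)

theorem gridGraph_adj_of_adj_of_column_between {i k l : Fin m} {j : Fin n} (hil : i < l)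
    (hlk : l < k) {w : Fin m × Fin n} (h : (gridGraph m n).Adj (l, j) w) :
    (gridGraph m n).Adj (i, j) w ∨ (gridGraph m n).Adj (k, j) w := by
  rcases h with ⟨h1, h2⟩ | ⟨h1, h2⟩
  · exact Or.inl (Or.inl ⟨hil.trans h1, h2⟩)
  · exact Or.inr (Or.inr ⟨h1.trans hlk, h2⟩)

end gridGraph

/-- Maximal independent sets of `G(m,n)` are "connected" along rows and
columns: vertices of `W` in the same row (resp. column) have all intermediate vertices
of that row (resp. column) in `W` as well. -/
theorem stmt2 (m n : ℕ)
    (W : Set (Fin m × Fin n))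
    (hW : MaxIndepOn (gridGraph m n) Set.univ W) :
    (∀ (i : Fin m) (j k l : Fin n),
      (i, j) ∈ W → (i, k) ∈ W → j < l → l < k → (i, l) ∈ W) ∧
    (∀ (i k l : Fin m) (j : Fin n),
      (i, j) ∈ W → (k, j) ∈ W → i < l → l < k → (l, j) ∈ W) := by
  constructor
  · intro i j k l hj hk hjl hlk
    refine hW.mem_of_forall_adj trivial fun w hw => ?_
    rcases gridGraph_adj_of_adj_of_row_between hjl hlk hw with h | h
    exacts [⟨_, hj, h⟩, ⟨_, hk, h⟩]
  · intro i k l j hi hk hil hlk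
    refine hW.mem_of_forall_adj trivial fun w hw => ?_
    rcases gridGraph_adj_of_adj_of_column_between hil hlk hw with h | h
    exacts [⟨_, hi, h⟩, ⟨_, hk, h⟩]
end

section
/- The graph G(m,n) contains no induced subgraph isomorphic to the 5-cycle C_5. -/
/-- The 5-cycle graph on `Fin 5`. -/
def cycle5 : SimpleGraph (Fin 5) := SimpleGraph.fromRel (fun i j => j = i + 1)

theorem Fin.exists_consecutive_of_forall_or_five {P Q : Fin 5 → Prop} (h : ∀ i, P i ∨ Q i) :
    ∃ i, P i ∧ P (i + 1) ∨ Q i ∧ Q (i + 1) := by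
  by_contra! hne
  have step : ∀ i, (P i → Q (i + 1)) ∧ (Q i → P (i + 1)) := fun i =>
    ⟨fun hp => (h _).resolve_left ((hne i).1 hp), fun hq => (h _).resolve_right ((hne i).2 hq)⟩
  rcases h 0 with h0 | h0
  · exact (hne 0).1 h0 <| (step 0).2 <| (step 4).1 <| (step 3).2 <| (step 2).1 <| (step 1).2 <|
      (step 0).1 h0
  · exact (hne 0).2 h0 <| (step 0).1 <| (step 4).2 <| (step 3).1 <| (step 2).2 <| (step 1).1 <|
      (step 0).2 h0

theorem cycle5_adj_add_one (i : Fin 5) : cycle5.Adj i (i + 1) := by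
  revert i; simp only [cycle5, SimpleGraph.fromRel_adj]; decide

theorem cycle5_not_adj_add_one_add_one (i : Fin 5) : ¬ cycle5.Adj i (i + 1 + 1) := by
  revert i; simp only [cycle5, SimpleGraph.fromRel_adj]; decide

theorem isTrans_fst_lt_and_snd_gt (α β : Type*) [Preorder α] [Preorder β] :
    IsTrans (α × β) fun u v => u.1 < v.1 ∧ v.2 < u.2 :=
  ⟨fun _ _ _ huv hvw => ⟨huv.1.trans hvw.1, hvw.2.trans huv.2⟩⟩

theorem SimpleGraph.not_induced_cycle5_of_isTrans {V : Type*} {G : SimpleGraph V}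
    {r : V → V → Prop} [IsTrans V r] (hG : ∀ u v, G.Adj u v ↔ r u v ∨ r v u)
    (f : Fin 5 → V) : ¬ ∀ s t, G.Adj (f s) (f t) ↔ cycle5.Adj s t := by
  intro hf
  obtain ⟨i, hi⟩ := Fin.exists_consecutive_of_forall_or_five
    (P := fun i => r (f i) (f (i + 1))) (Q := fun i => r (f (i + 1)) (f i))
    fun i => (hG _ _).1 ((hf _ _).2 (cycle5_adj_add_one i))
  apply cycle5_not_adj_add_one_add_one i
  rw [← hf, hG]
  rcases hi with ⟨h₁, h₂⟩ | ⟨h₁, h₂⟩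
  · exact Or.inl (_root_.trans h₁ h₂)
  · exact Or.inr (_root_.trans h₂ h₁)

/-- `G(m,n)` has no induced subgraph isomorphic to the 5-cycle. -/
theorem stmt3 (m n : ℕ) :
    ¬ ∃ f : Fin 5 → Fin m × Fin n, Function.Injective f ∧
      ∀ s t : Fin 5, (gridGraph m n).Adj (f s) (f t) ↔ cycle5.Adj s t := by
  rintro ⟨f, -, hf⟩
  have := isTrans_fst_lt_and_snd_gt (Fin m) (Fin n)
  exact SimpleGraph.not_induced_cycle5_of_isTrans (fun _ _ => Iff.rfl) f hf
end

section
/- The induced matching number of G(m,n) equals min{m-1, n-1}. -/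
/-- `M` is an induced matching of the induced subgraph of `G` on `A`:
a set of pairwise disjoint edges of `G` with all endpoints in `A`, such that the only
adjacencies among the endpoints are the edges of `M` themselves. -/
def IsInducedMatchingOn {V : Type*} (G : SimpleGraph V) (A : Set V) (M : Set (Sym2 V)) :
    Prop :=
  (∀ e ∈ M, ∀ v ∈ e, v ∈ A) ∧
  (∀ e ∈ M, ∃ u v, G.Adj u v ∧ e = s(u, v)) ∧
  (∀ e ∈ M, ∀ f ∈ M, e ≠ f → ∀ v ∈ e, v ∉ f) ∧
  (∀ u v : V, (∃ e ∈ M, u ∈ e) → (∃ e ∈ M, v ∈ e) → G.Adj u v → s(u, v) ∈ M)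

/-!
An edge of `G(m,n)` joins an upper-right vertex to a lower-left one. In an induced matching two
distinct edges cannot share the row of their upper endpoints: otherwise the upper endpoint lying
further right would be adjacent to the lower endpoint of the other edge. The upper rows avoid the
last row, so there are at most `m - 1` edges, and at most `n - 1` by the symmetry
`(i, j) ↦ (j, i)`. Conversely the edges `{x_{s,s+1}, x_{s+1,s}}` form an induced matching, since
all their endpoints lie next to the diagonal.
-/

namespace IsInducedMatchingOn

variable {V W : Type*} {G : SimpleGraph V} {A : Set V} {M : Set (Sym2 V)}

theorem not_adj_of_ne (h : IsInducedMatchingOn G A M) {e f : Sym2 V} {u v : V}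
    (he : e ∈ M) (hf : f ∈ M) (hef : e ≠ f) (hu : u ∈ e) (hv : v ∈ f) : ¬ G.Adj u v := by
  intro huv
  obtain ⟨-, -, hdisj, hinduced⟩ := h
  have huvM : s(u, v) ∈ M := hinduced u v ⟨e, he, hu⟩ ⟨f, hf, hv⟩ huv
  by_cases hue : s(u, v) = e
  · exact hdisj e he f hf hef v (hue ▸ Sym2.mem_mk_right u v) hv
  · exact hdisj e he _ huvM (Ne.symm hue) u hu (Sym2.mem_mk_left u v)

theorem map {H : SimpleGraph W} (φ : G ≃g H) (h : IsInducedMatchingOn G A M) :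
    IsInducedMatchingOn H (φ '' A) (Sym2.map φ '' M) := by
  obtain ⟨hA, hadj, hdisj, hinduced⟩ := h
  refine ⟨?_, ?_, ?_, ?_⟩
  · rintro _ ⟨e, he, rfl⟩ _ hw
    obtain ⟨v, hv, rfl⟩ := Sym2.mem_map.1 hw
    exact ⟨v, hA e he v hv, rfl⟩
  · rintro _ ⟨e, he, rfl⟩
    obtain ⟨u, v, huv, rfl⟩ := hadj e he
    exact ⟨φ u, φ v, φ.map_adj_iff.2 huv, rfl⟩
  · rintro _ ⟨e, he, rfl⟩ _ ⟨f, hf, rfl⟩ hef _ hw hw'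
    obtain ⟨v, hv, rfl⟩ := Sym2.mem_map.1 hw
    obtain ⟨v', hv', hvv'⟩ := Sym2.mem_map.1 hw'
    rw [φ.injective hvv'] at hv'
    exact hdisj e he f hf (fun h ↦ hef (h ▸ rfl)) v hv hv'
  · rintro _ _ ⟨_, ⟨e, he, rfl⟩, hu⟩ ⟨_, ⟨f, hf, rfl⟩, hv⟩ huv
    obtain ⟨u, hue, rfl⟩ := Sym2.mem_map.1 hu
    obtain ⟨v, hvf, rfl⟩ := Sym2.mem_map.1 hv
    exact ⟨s(u, v), hinduced u v ⟨e, he, hue⟩ ⟨f, hf, hvf⟩ (φ.map_adj_iff.1 huv), rfl⟩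

end IsInducedMatchingOn

namespace gridGraph

variable {m n : ℕ} {A : Set (Fin m × Fin n)} {M : Set (Sym2 (Fin m × Fin n))}

def swapIso (m n : ℕ) : gridGraph m n ≃g gridGraph n m where
  toEquiv := Equiv.prodComm _ _
  map_rel_iff' := by
    intro u v
    simp only [gridGraph, Equiv.prodComm_apply, Prod.fst_swap, Prod.snd_swap]
    tauto

theorem exists_eq_mk_of_adj {a b : Fin m × Fin n} (hab : (gridGraph m n).Adj a b) :
    ∃ u v : Fin m × Fin n, u.1 < v.1 ∧ v.2 < u.2 ∧ s(a, b) = s(u, v) := by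
  rcases hab with ⟨h1, h2⟩ | ⟨h1, h2⟩
  · exact ⟨a, b, h1, h2, rfl⟩
  · exact ⟨b, a, h1, h2, Sym2.eq_swap⟩

theorem exists_eq_mk_of_mem (h : IsInducedMatchingOn (gridGraph m n) A M)
    {e : Sym2 (Fin m × Fin n)} (he : e ∈ M) :
    ∃ u v : Fin m × Fin n, u.1 < v.1 ∧ v.2 < u.2 ∧ e = s(u, v) := by
  obtain ⟨a, b, hab, rfl⟩ := h.2.1 e he
  exact exists_eq_mk_of_adj hab

theorem injOn_inf_map_fst (h : IsInducedMatchingOn (gridGraph m n) A M) :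
    Set.InjOn (fun e ↦ (e.map Prod.fst).inf) M := by
  intro e he f hf hrow
  by_contra hef
  obtain ⟨u, v, huv₁, huv₂, rfl⟩ := exists_eq_mk_of_mem h he
  obtain ⟨u', v', huv₁', huv₂', rfl⟩ := exists_eq_mk_of_mem h hf
  simp only [Sym2.map_mk, Sym2.inf_mk, inf_of_le_left huv₁.le, inf_of_le_left huv₁'.le] at hrow
  rcases le_total u.2 u'.2 with hcol | hcol
  · exact h.not_adj_of_ne hf he (Ne.symm hef) (Sym2.mem_mk_left _ _) (Sym2.mem_mk_right _ _)
      (Or.inl ⟨hrow ▸ huv₁, huv₂.trans_le hcol⟩)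
  · exact h.not_adj_of_ne he hf hef (Sym2.mem_mk_left _ _) (Sym2.mem_mk_right _ _)
      (Or.inl ⟨hrow ▸ huv₁', huv₂'.trans_le hcol⟩)

theorem ncard_le_sub_one_left (h : IsInducedMatchingOn (gridGraph m n) A M) :
    M.ncard ≤ m - 1 := by
  calc M.ncard ≤ (Set.Iio (m - 1)).ncard := by
        refine Set.ncard_le_ncard_of_injOn (fun e ↦ ((e.map Prod.fst).inf : ℕ)) ?_
          (Fin.val_injective.comp_injOn (injOn_inf_map_fst h)) (Set.finite_Iio _)
        intro e he
        obtain ⟨u, v, huv, -, rfl⟩ := exists_eq_mk_of_mem h he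
        simp only [Sym2.map_mk, Sym2.inf_mk, inf_of_le_left huv.le, Set.mem_Iio]
        have := v.1.isLt
        omega
    _ = m - 1 := Set.ncard_Iio_nat _

theorem ncard_le_sub_one_right (h : IsInducedMatchingOn (gridGraph m n) A M) :
    M.ncard ≤ n - 1 := by
  rw [← Set.ncard_image_of_injective M (Sym2.map.injective (swapIso m n).injective)]
  exact ncard_le_sub_one_left (h.map (swapIso m n))

def antidiagEdge (s : Fin (min (m - 1) (n - 1))) : Sym2 (Fin m × Fin n) :=
  s((⟨s, by omega⟩, ⟨s + 1, by omega⟩), (⟨s + 1, by omega⟩, ⟨s, by omega⟩))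

theorem val_of_mem_antidiagEdge {s : Fin (min (m - 1) (n - 1))} {w : Fin m × Fin n}
    (hw : w ∈ antidiagEdge s) :
    ((w.1 : ℕ) = s ∧ (w.2 : ℕ) = s + 1) ∨ ((w.1 : ℕ) = s + 1 ∧ (w.2 : ℕ) = s) := by
  rcases Sym2.mem_iff.1 hw with rfl | rfl <;> simp

theorem antidiagEdge_injective :
    Function.Injective (antidiagEdge : Fin (min (m - 1) (n - 1)) → Sym2 (Fin m × Fin n)) := by
  intro a b hab
  have htop : (⟨a, by omega⟩, ⟨a + 1, by omega⟩) ∈ antidiagEdge (m := m) (n := n) b := by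
    rw [← hab]
    exact Sym2.mem_mk_left _ _
  ext
  have := val_of_mem_antidiagEdge htop
  simp only at this
  omega

theorem isInducedMatchingOn_range_antidiagEdge :
    IsInducedMatchingOn (gridGraph m n) Set.univ (Set.range antidiagEdge) := by
  refine ⟨fun _ _ _ _ ↦ Set.mem_univ _, ?_, ?_, ?_⟩
  · rintro _ ⟨s, rfl⟩
    exact ⟨_, _, Or.inl ⟨Fin.lt_def.2 (by simp), Fin.lt_def.2 (by simp)⟩, rfl⟩
  · rintro _ ⟨a, rfl⟩ _ ⟨b, rfl⟩ hab w hwa hwb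
    apply hab
    congr 1
    ext
    rcases val_of_mem_antidiagEdge hwa with ha | ha <;>
      rcases val_of_mem_antidiagEdge hwb with hb | hb <;> omega
  · rintro u v ⟨_, ⟨a, rfl⟩, hu⟩ ⟨_, ⟨b, rfl⟩, hv⟩ huv
    -- near the diagonal, only the two endpoints of one edge are adjacent
    have hab : a = b := by
      ext
      simp only [gridGraph, Fin.lt_def] at huv
      rcases val_of_mem_antidiagEdge hu with ha | ha <;>
        rcases val_of_mem_antidiagEdge hv with hb | hb <;> omega
    subst hab
    exact ⟨a, (Sym2.mem_and_mem_iff huv.ne).1 ⟨hu, hv⟩⟩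

theorem ncard_range_antidiagEdge :
    (Set.range (antidiagEdge : Fin (min (m - 1) (n - 1)) → Sym2 (Fin m × Fin n))).ncard =
      min (m - 1) (n - 1) := by
  rw [Set.ncard_range_of_injective antidiagEdge_injective, Nat.card_eq_fintype_card,
    Fintype.card_fin]

end gridGraph

theorem stmt4_general (m n : ℕ) :
    IsGreatest {k | ∃ M : Set (Sym2 (Fin m × Fin n)),
        IsInducedMatchingOn (gridGraph m n) Set.univ M ∧ M.ncard = k}
      (min (m - 1) (n - 1)) := by
  refine ⟨⟨_, gridGraph.isInducedMatchingOn_range_antidiagEdge,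
    gridGraph.ncard_range_antidiagEdge⟩, ?_⟩
  rintro k ⟨M, hM, rfl⟩
  exact le_min (gridGraph.ncard_le_sub_one_left hM) (gridGraph.ncard_le_sub_one_right hM)

/-- the induced matching number of `G(m,n)` equals `min (m-1) (n-1)`. -/
theorem stmt4 (m n : ℕ) (hm : 1 ≤ m) (hn : 1 ≤ n) :
    IsGreatest {k | ∃ M : Set (Sym2 (Fin m × Fin n)),
        IsInducedMatchingOn (gridGraph m n) Set.univ M ∧ M.ncard = k}
      (min (m - 1) (n - 1)) :=
  stmt4_general m n
end

section
/- The set of edges {{x_{1,2}, x_{2,1}}, {x_{2,3}, x_{3,2}}, ..., {x_{m-1,m}, x_{m,m-1}}} is an induced matching of size m-1 in G(m,n), whenever 2 ≤ m ≤ n. -/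
section InducedMatching

variable {V ι : Type*} {G : SimpleGraph V} {a b : ι → V}

theorem injective_mk_of_adj_eq_of_mem (hadj : ∀ i, G.Adj (a i) (b i))
    (hsep : ∀ i j u v, u ∈ s(a i, b i) → v ∈ s(a j, b j) → G.Adj u v → i = j) :
    Function.Injective fun i ↦ s(a i, b i) := by
  intro i j (hij : s(a i, b i) = s(a j, b j))
  have hbi : b i ∈ s(a j, b j) := hij ▸ Sym2.mem_mk_right _ _
  exact hsep i j (a i) (b i) (Sym2.mem_mk_left _ _) hbi (hadj i)

theorem isInducedMatchingOn_univ_range (hadj : ∀ i, G.Adj (a i) (b i))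
    (hsep : ∀ i j u v, u ∈ s(a i, b i) → v ∈ s(a j, b j) → G.Adj u v → i = j) :
    IsInducedMatchingOn G Set.univ (Set.range fun i ↦ s(a i, b i)) := by
  refine ⟨fun _ _ _ _ ↦ trivial, ?_, ?_, ?_⟩
  · rintro _ ⟨i, rfl⟩
    exact ⟨a i, b i, hadj i, rfl⟩
  · rintro _ ⟨i, rfl⟩ _ ⟨j, rfl⟩ hne v hvi hvj
    refine hne (congrArg (fun i ↦ s(a i, b i)) ?_)
    -- a shared vertex is adjacent to the other end of edge `i`
    rcases Sym2.mem_iff.1 hvi with rfl | rfl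
    · exact hsep i j (b i) _ (Sym2.mem_mk_right _ _) hvj (hadj i).symm
    · exact hsep i j (a i) _ (Sym2.mem_mk_left _ _) hvj (hadj i)
  · rintro u v ⟨_, ⟨i, rfl⟩, hu⟩ ⟨_, ⟨j, rfl⟩, hv⟩ huv
    obtain rfl := hsep i j u v hu hv huv
    exact ⟨i, (Sym2.mem_and_mem_iff huv.ne).1 ⟨hu, hv⟩⟩

end InducedMatching

namespace gridGraph

variable {m n : ℕ}

def superdiag (hmn : m ≤ n) (t : Fin (m - 1)) : Fin m × Fin n :=
  (⟨t, by omega⟩, ⟨t + 1, by omega⟩)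

def subdiag (hmn : m ≤ n) (t : Fin (m - 1)) : Fin m × Fin n :=
  (⟨t + 1, by omega⟩, ⟨t, by omega⟩)

theorem adj_superdiag_subdiag (hmn : m ≤ n) (t : Fin (m - 1)) :
    (gridGraph m n).Adj (superdiag hmn t) (subdiag hmn t) :=
  Or.inl ⟨Fin.lt_def.2 (by simp [superdiag, subdiag]),
    Fin.lt_def.2 (by simp [superdiag, subdiag])⟩

theorem eq_of_adj_of_mem_mk_superdiag_subdiag (hmn : m ≤ n) (i j : Fin (m - 1))
    (u v : Fin m × Fin n)
    (hu : u ∈ s(superdiag hmn i, subdiag hmn i)) (hv : v ∈ s(superdiag hmn j, subdiag hmn j))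
    (huv : (gridGraph m n).Adj u v) : i = j := by
  rcases Sym2.mem_iff.1 hu with rfl | rfl <;> rcases Sym2.mem_iff.1 hv with rfl | rfl <;>
    simp only [gridGraph, superdiag, subdiag, Fin.lt_def] at huv <;> omega

end gridGraph

open gridGraph in
/-- for `2 ≤ m ≤ n`, the edges `{x_{t,t+1}, x_{t+1,t}}` for `t = 1,…,m-1`
form an induced matching of size `m - 1` in `G(m,n)`.  (0-indexed: the edge joins
`(t, t+1)` and `(t+1, t)` for `t = 0,…,m-2`.) -/
theorem stmt5 (m n : ℕ) (hmn : m ≤ n)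
    (M : Set (Sym2 (Fin m × Fin n)))
    (hM : M = {e | ∃ t : ℕ, ∃ ht : t + 1 < m,
      e = s((((⟨t, by omega⟩ : Fin m), (⟨t + 1, by omega⟩ : Fin n)) : Fin m × Fin n),
            (((⟨t + 1, ht⟩ : Fin m), (⟨t, by omega⟩ : Fin n)) : Fin m × Fin n))}) :
    IsInducedMatchingOn (gridGraph m n) Set.univ M ∧ M.ncard = m - 1 := by
  obtain rfl : M = Set.range fun t ↦ s(superdiag hmn t, subdiag hmn t) := by
    subst hM
    ext e
    constructor
    · rintro ⟨t, ht, rfl⟩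
      exact ⟨⟨t, by omega⟩, rfl⟩
    · rintro ⟨t, rfl⟩
      exact ⟨t, by omega, rfl⟩
  have hadj := adj_superdiag_subdiag hmn
  have hsep := eq_of_adj_of_mem_mk_superdiag_subdiag hmn
  refine ⟨isInducedMatchingOn_univ_range hadj hsep, ?_⟩
  rw [Set.ncard_range_of_injective (injective_mk_of_adj_eq_of_mem hadj hsep), Nat.card_fin]
end

section
/- The graph G(m,n) is vertex decomposable, where vertex decomposability of a graph is defined recursively: a graph is vertex decomposable if it is well-covered and either consists only of isolated vertices, or has a vertex x (a shedding vertex) such that both G \ x and G \ N[x] are vertex decomposable. -/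
/-- The induced subgraph of `G` on `A` is well-covered: all its maximal independent
sets have the same cardinality. -/
def WellCoveredOn {V : Type*} (G : SimpleGraph V) (A : Set V) : Prop :=
  ∀ W W', MaxIndepOn G A W → MaxIndepOn G A W' → W.ncard = W'.ncard

/-- Vertex decomposability for the induced subgraph of `G` on the vertex subset `A`:
it is well-covered, and either it has no edges (only isolated vertices), or there is a
shedding vertex `x ∈ A` such that deleting `x` and deleting the closed neighborhood
`N[x]` both give vertex decomposable graphs. -/
inductive VertexDecomposableOn {V : Type*} (G : SimpleGraph V) : Set V → Prop
  | isolated (A : Set V) (hwc : WellCoveredOn G A)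
      (h : ∀ u ∈ A, ∀ v ∈ A, ¬ G.Adj u v) : VertexDecomposableOn G A
  | shed (A : Set V) (x : V) (hx : x ∈ A) (hwc : WellCoveredOn G A)
      (h1 : VertexDecomposableOn G (A \ {x}))
      (h2 : VertexDecomposableOn G (A \ ({x} ∪ {y | G.Adj x y}))) :
      VertexDecomposableOn G A

/-!
Two cells of the grid are non-adjacent exactly when they are comparable in the product order,
so independent sets are chains. Work with the rectangle of rows `≤ r` and columns `< c` minus the
first `a` cells of row `r`, and shed its first remaining cell `x = (r, a)`: deleting `x` shortens
the last row, while deleting `N[x]` leaves the rectangle of rows `< r` and columns `≤ a` plus the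
cells to the right of `x`, which are isolated. Such a region has a least and a greatest cell, and
between two comparable cells whose ranks (row + column) differ by at least two it contains a
cell strictly between them. Hence every maximal chain is a saturated chain from bottom to top,
and all of them have the same size.
-/

section IsolatedVertices

variable {V : Type*} {G : SimpleGraph V} {A B W : Set V}

lemma wellCoveredOn_of_forall_not_adj (h : ∀ u ∈ A, ∀ v ∈ A, ¬ G.Adj u v) :
    WellCoveredOn G A := by
  intro W W' hW hW'
  rw [← hW.2 A ⟨subset_rfl, h⟩ hW.1.1, ← hW'.2 A ⟨subset_rfl, h⟩ hW'.1.1]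

lemma vertexDecomposableOn_of_forall_not_adj (h : ∀ u ∈ A, ∀ v ∈ A, ¬ G.Adj u v) :
    VertexDecomposableOn G A :=
  .isolated A (wellCoveredOn_of_forall_not_adj h) h

lemma IndepOn.union_of_isolated (hW : IndepOn G A W)
    (hB : ∀ u ∈ B, ∀ v ∈ A ∪ B, ¬ G.Adj u v) : IndepOn G (A ∪ B) (W ∪ B) := by
  refine ⟨Set.union_subset_union_left B hW.1, ?_⟩
  rintro u (hu | hu) v (hv | hv)
  · exact hW.2 u hu v hv
  · exact fun h => hB v hv u (Or.inl (hW.1 hu)) h.symm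
  · exact hB u hu v (Or.inl (hW.1 hv))
  · exact hB u hu v (Or.inr hv)

lemma MaxIndepOn.inter_union_of_isolated (hB : ∀ u ∈ B, ∀ v ∈ A ∪ B, ¬ G.Adj u v)
    (hW : MaxIndepOn G (A ∪ B) W) : MaxIndepOn G A (W ∩ A) ∧ W ∩ A ∪ B = W := by
  have hsplit : ∀ W', W ∩ A ⊆ W' → W ⊆ W' ∪ B := fun W' hW' v hv =>
    (hW.1.1 hv).imp (fun hvA => hW' ⟨hv, hvA⟩) id
  have hWA : IndepOn G A (W ∩ A) :=
    ⟨Set.inter_subset_right, fun u hu v hv => hW.1.2 u hu.1 v hv.1⟩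
  refine ⟨⟨hWA, fun W' hW' hWW' => ?_⟩,
    hW.2 _ (hWA.union_of_isolated hB) (hsplit _ subset_rfl)⟩
  have hW'B : W' ∪ B = W := hW.2 _ (hW'.union_of_isolated hB) (hsplit W' hWW')
  exact subset_antisymm (fun v hv => ⟨hW'B ▸ Or.inl hv, hW'.1 hv⟩) hWW'

lemma wellCoveredOn_union_of_isolated [Finite V] (hA : WellCoveredOn G A) (hAB : Disjoint A B)
    (hB : ∀ u ∈ B, ∀ v ∈ A ∪ B, ¬ G.Adj u v) : WellCoveredOn G (A ∪ B) := by
  have hncard : ∀ W, MaxIndepOn G (A ∪ B) W → W.ncard = (W ∩ A).ncard + B.ncard := by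
    intro W hW
    conv_lhs => rw [← (hW.inter_union_of_isolated hB).2]
    exact Set.ncard_union_eq (hAB.mono_left Set.inter_subset_right)
  intro W W' hW hW'
  rw [hncard W hW, hncard W' hW',
    hA _ _ (hW.inter_union_of_isolated hB).1 (hW'.inter_union_of_isolated hB).1]

lemma VertexDecomposableOn.union_of_isolated [Finite V] (hA : VertexDecomposableOn G A)
    (hAB : Disjoint A B) (hB : ∀ u ∈ B, ∀ v ∈ A ∪ B, ¬ G.Adj u v) :
    VertexDecomposableOn G (A ∪ B) := by
  induction hA with
  | isolated A hwc h =>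
    refine .isolated _ (wellCoveredOn_union_of_isolated hwc hAB hB) ?_
    rintro u (hu | hu) v hv
    · rcases hv with hv | hv
      · exact h u hu v hv
      · exact fun huv => hB v hv u (Or.inl hu) huv.symm
    · exact hB u hu v hv
  | shed A x hx hwc _ _ ih₁ ih₂ =>
    refine .shed _ x (Or.inl hx) (wellCoveredOn_union_of_isolated hwc hAB hB) ?_ ?_
    · have hxB : Disjoint B {x} := Set.disjoint_singleton_right.2 (hAB.notMem_of_mem_left hx)
      rw [Set.union_sdiff_distrib, sdiff_eq_left.2 hxB]
      exact ih₁ (hAB.mono_left Set.sdiff_subset) fun u hu v hv =>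
        hB u hu v (Set.union_subset_union_left B Set.sdiff_subset hv)
    · have hNB : Disjoint B ({x} ∪ {y | G.Adj x y}) := by
        refine Set.disjoint_union_right.2 ⟨Set.disjoint_singleton_right.2
          (hAB.notMem_of_mem_left hx), Set.disjoint_left.2 fun v hv hxv => ?_⟩
        exact hB v hv x (Or.inl hx) hxv.symm
      rw [Set.union_sdiff_distrib, sdiff_eq_left.2 hNB]
      exact ih₂ (hAB.mono_left Set.sdiff_subset) fun u hu v hv =>
        hB u hu v (Set.union_subset_union_left B Set.sdiff_subset hv)

end IsolatedVertices

section IncomparabilityGraph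

variable {α : Type*} [PartialOrder α] {G : SimpleGraph α} {A W : Set α}

lemma indepOn_iff_isChain (hG : ∀ u v, ¬ G.Adj u v ↔ u ≤ v ∨ v ≤ u) :
    IndepOn G A W ↔ W ⊆ A ∧ IsChain (· ≤ ·) W :=
  and_congr_right fun _ => ⟨fun h u hu v hv _ => (hG u v).1 (h u hu v hv),
    fun h u hu v hv => (hG u v).2 (h.total hu hv)⟩

lemma MaxIndepOn.mem_of_forall_comparable (hG : ∀ u v, ¬ G.Adj u v ↔ u ≤ v ∨ v ≤ u)
    (hW : MaxIndepOn G A W) {z : α} (hz : z ∈ A) (hzW : ∀ y ∈ W, z ≤ y ∨ y ≤ z) : z ∈ W := by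
  obtain ⟨hWA, hchain⟩ := (indepOn_iff_isChain hG).1 hW.1
  have hins : IndepOn G A (insert z W) :=
    (indepOn_iff_isChain hG).2 ⟨Set.insert_subset hz hWA, hchain.insert fun y hy _ => hzW y hy⟩
  exact hW.2 _ hins (Set.subset_insert z W) ▸ Set.mem_insert z W

variable {f : α → ℕ} {b t : α}

structure IsRankSaturated (f : α → ℕ) (A : Set α) (b t : α) : Prop where
  strictMono : StrictMono f
  bot_mem : b ∈ A
  top_mem : t ∈ A
  bot_le : ∀ v ∈ A, b ≤ v
  le_top : ∀ v ∈ A, v ≤ t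
  exists_between : ∀ u ∈ A, ∀ v ∈ A, u < v → f u + 1 < f v → ∃ z ∈ A, u < z ∧ z < v

namespace MaxIndepOn

variable (hG : ∀ u v, ¬ G.Adj u v ↔ u ≤ v ∨ v ≤ u) (hA : IsRankSaturated f A b t)
  (hW : MaxIndepOn G A W)
include hG hA hW

lemma bot_mem : b ∈ W :=
  hW.mem_of_forall_comparable hG hA.bot_mem fun y hy => Or.inl (hA.bot_le y (hW.1.1 hy))

lemma top_mem : t ∈ W :=
  hW.mem_of_forall_comparable hG hA.top_mem fun y hy => Or.inr (hA.le_top y (hW.1.1 hy))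

lemma exists_rank_succ {w : α} (hw : w ∈ W) (hwt : w ≠ t) : ∃ w' ∈ W, f w' = f w + 1 := by
  obtain ⟨hWA, hchain⟩ := (indepOn_iff_isChain hG).1 hW.1
  obtain ⟨q, ⟨hqW, hwq⟩, hqmin⟩ := (InvImage.wf f wellFounded_lt).has_min {y ∈ W | w < y}
    ⟨t, hW.top_mem hG hA, lt_of_le_of_ne (hA.le_top w (hWA hw)) hwt⟩
  -- `q` is the successor of `w` in the chain `W`
  have hgap : ∀ y ∈ W, y ≤ w ∨ q ≤ y := by
    intro y hy
    rcases hchain.total hy hw with hyw | hwy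
    · exact Or.inl hyw
    rcases hwy.lt_or_eq with hwy | rfl
    · rcases hchain.total hy hqW with hyq | hqy
      · rcases hyq.lt_or_eq with hyq | rfl
        · exact absurd (hA.strictMono hyq) (hqmin y ⟨hy, hwy⟩)
        · exact Or.inr le_rfl
      · exact Or.inr hqy
    · exact Or.inl le_rfl
  refine ⟨q, hqW, le_antisymm (not_lt.1 fun hfq => ?_) (hA.strictMono hwq)⟩
  obtain ⟨z, hzA, hwz, hzq⟩ := hA.exists_between w (hWA hw) q (hWA hqW) hwq hfq
  have hzW : z ∈ W := hW.mem_of_forall_comparable hG hzA fun y hy =>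
    (hgap y hy).symm.imp hzq.le.trans fun hyw => hyw.trans hwz.le
  exact hqmin z ⟨hzW, hwz⟩ (hA.strictMono hzq)

lemma image_rank : f '' W = Set.Icc (f b) (f t) := by
  refine subset_antisymm ?_ fun k hk => ?_
  · rintro _ ⟨w, hw, rfl⟩
    exact ⟨hA.strictMono.monotone (hA.bot_le w (hW.1.1 hw)),
      hA.strictMono.monotone (hA.le_top w (hW.1.1 hw))⟩
  obtain ⟨hbk, hkt⟩ := hk
  induction k, hbk using Nat.le_induction with
  | base => exact ⟨b, hW.bot_mem hG hA, rfl⟩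
  | succ k _ ih =>
    obtain ⟨w, hw, rfl⟩ := ih (by omega)
    exact hW.exists_rank_succ hG hA hw (by rintro rfl; omega)

lemma ncard_eq : W.ncard = f t + 1 - f b := by
  have hinj : Set.InjOn f W := by
    intro u hu v hv huv
    by_contra hne
    rcases ((indepOn_iff_isChain hG).1 hW.1).2 hu hv hne with h | h
    · exact (hA.strictMono (lt_of_le_of_ne h hne)).ne huv
    · exact (hA.strictMono (lt_of_le_of_ne h (Ne.symm hne))).ne' huv
  rw [← hinj.ncard_image, hW.image_rank hG hA, Set.ncard_Icc_nat]

end MaxIndepOn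

lemma IsRankSaturated.wellCoveredOn (hG : ∀ u v, ¬ G.Adj u v ↔ u ≤ v ∨ v ≤ u)
    (hA : IsRankSaturated f A b t) : WellCoveredOn G A := fun _ _ hW hW' => by
  rw [hW.ncard_eq hG hA, hW'.ncard_eq hG hA]

end IncomparabilityGraph

namespace gridGraph

variable {m n : ℕ}

lemma not_adj_iff (u v : Fin m × Fin n) : ¬ (gridGraph m n).Adj u v ↔ u ≤ v ∨ v ≤ u := by
  change ¬ ((u.1 < v.1 ∧ v.2 < u.2) ∨ (v.1 < u.1 ∧ u.2 < v.2)) ↔ _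
  simp only [Prod.le_def, Fin.lt_def, Fin.le_def]
  omega

lemma strictMono_rank : StrictMono fun v : Fin m × Fin n => (v.1 : ℕ) + v.2 := by
  intro u v huv
  simp only [Prod.lt_iff, Fin.lt_def, Fin.le_def] at huv
  dsimp only
  omega

end gridGraph

def notchedRect {m n : ℕ} (r a c : ℕ) : Set (Fin m × Fin n) :=
  {v | (v.2 : ℕ) < c ∧ ((v.1 : ℕ) < r ∨ (v.1 : ℕ) = r ∧ a ≤ v.2)}

def rowSegment {m n : ℕ} (r a c : ℕ) : Set (Fin m × Fin n) :=
  {v | (v.1 : ℕ) = r ∧ a ≤ v.2 ∧ v.2 < c}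

namespace notchedRect

variable {m n r a c : ℕ}

lemma isRankSaturated (hr : 0 < r) (hrm : r < m) (hac : a < c) (hcn : c ≤ n) :
    IsRankSaturated (fun v : Fin m × Fin n => (v.1 : ℕ) + v.2) (notchedRect r a c)
      (⟨0, by omega⟩, ⟨0, by omega⟩) (⟨r, hrm⟩, ⟨c - 1, by omega⟩) where
  strictMono := gridGraph.strictMono_rank
  bot_mem := by simp only [notchedRect, Set.mem_ofPred_eq]; omega
  top_mem := by simp only [notchedRect, Set.mem_ofPred_eq, true_and]; omega
  bot_le v _ := by simp only [Prod.le_def, Fin.le_def]; omega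
  le_top v hv := by
    simp only [notchedRect, Set.mem_ofPred_eq] at hv
    simp only [Prod.le_def, Fin.le_def]
    omega
  exists_between u hu v hv huv hgap := by
    simp only [notchedRect, Set.mem_ofPred_eq] at hu hv
    simp only [Prod.lt_iff, Fin.lt_def, Fin.le_def] at huv
    by_cases hcol : (u.2 : ℕ) < v.2
    · refine ⟨(u.1, ⟨u.2 + 1, by omega⟩), ?_, ?_, ?_⟩ <;>
        simp only [notchedRect, Set.mem_ofPred_eq, Prod.lt_iff, Fin.lt_def, Fin.le_def] <;>
        omega
    · refine ⟨(⟨u.1 + 1, by omega⟩, u.2), ?_, ?_, ?_⟩ <;>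
        simp only [notchedRect, Set.mem_ofPred_eq, Prod.lt_iff, Fin.lt_def, Fin.le_def] <;>
        omega

lemma forall_not_adj_zero (u : Fin m × Fin n) (hu : u ∈ notchedRect 0 a c) (v : Fin m × Fin n)
    (hv : v ∈ notchedRect 0 a c) : ¬ (gridGraph m n).Adj u v := by
  simp only [notchedRect, Set.mem_ofPred_eq] at hu hv
  change ¬ ((u.1 < v.1 ∧ v.2 < u.2) ∨ (v.1 < u.1 ∧ u.2 < v.2))
  simp only [Fin.lt_def]
  omega

lemma succ_eq_of_row_empty (h : c ≤ a ∨ m ≤ r + 1) :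
    (notchedRect (r + 1) a c : Set (Fin m × Fin n)) = notchedRect r 0 c := by
  ext v
  simp only [notchedRect, Set.mem_ofPred_eq]
  omega

lemma diff_singleton (hrm : r < m) (han : a < n) :
    notchedRect r a c \ {(⟨r, hrm⟩, ⟨a, han⟩)} =
      (notchedRect r (a + 1) c : Set (Fin m × Fin n)) := by
  ext v
  simp only [notchedRect, Set.mem_sdiff, Set.mem_ofPred_eq, Set.mem_singleton_iff, Prod.ext_iff,
    Fin.ext_iff]
  omega

lemma diff_closedNbhd (hrm : r + 1 < m) (hac : a < c) (han : a < n) :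
    notchedRect (r + 1) a c \
        ({(⟨r + 1, hrm⟩, ⟨a, han⟩)} ∪ {y | (gridGraph m n).Adj (⟨r + 1, hrm⟩, ⟨a, han⟩) y}) =
      notchedRect r 0 (a + 1) ∪ rowSegment (r + 1) (a + 1) c := by
  ext v
  change _ ∧ ¬ (_ ∨ ((r + 1 < v.1 ∧ v.2 < a) ∨ (v.1 < r + 1 ∧ a < v.2))) ↔ _
  simp only [notchedRect, rowSegment, Set.mem_union, Set.mem_ofPred_eq, Set.mem_singleton_iff,
    Prod.ext_iff, Fin.ext_iff]
  omega

lemma disjoint_rowSegment :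
    Disjoint (notchedRect r 0 (a + 1) : Set (Fin m × Fin n)) (rowSegment (r + 1) (a + 1) c) := by
  refine Set.disjoint_left.2 fun v hv hv' => ?_
  simp only [notchedRect, rowSegment, Set.mem_ofPred_eq] at hv hv'
  omega

lemma rowSegment_not_adj (u : Fin m × Fin n) (hu : u ∈ rowSegment (r + 1) (a + 1) c)
    (v : Fin m × Fin n) (hv : v ∈ notchedRect r 0 (a + 1) ∪ rowSegment (r + 1) (a + 1) c) :
    ¬ (gridGraph m n).Adj u v := by
  simp only [notchedRect, rowSegment, Set.mem_union, Set.mem_ofPred_eq] at hu hv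
  change ¬ ((u.1 < v.1 ∧ v.2 < u.2) ∨ (v.1 < u.1 ∧ u.2 < v.2))
  simp only [Fin.lt_def]
  omega

lemma vertexDecomposableOn_succ (hcn : c ≤ n)
    (ih : ∀ c ≤ n, VertexDecomposableOn (gridGraph m n) (notchedRect r 0 c)) (a : ℕ) :
    VertexDecomposableOn (gridGraph m n) (notchedRect (r + 1) a c) := by
  by_cases hx : a < c ∧ r + 1 < m
  · obtain ⟨hac, hrm⟩ := hx
    have han : a < n := by omega
    have hx : (⟨r + 1, hrm⟩, ⟨a, han⟩) ∈ (notchedRect (r + 1) a c : Set (Fin m × Fin n)) := by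
      simp only [notchedRect, Set.mem_ofPred_eq, true_and]
      omega
    refine .shed _ _ hx
      ((isRankSaturated r.succ_pos hrm hac hcn).wellCoveredOn gridGraph.not_adj_iff) ?_ ?_
    · rw [diff_singleton]
      exact vertexDecomposableOn_succ hcn ih (a + 1)
    · rw [diff_closedNbhd hrm hac han]
      exact (ih (a + 1) (by omega)).union_of_isolated disjoint_rowSegment rowSegment_not_adj
  · rw [succ_eq_of_row_empty (by omega)]
    exact ih c hcn
termination_by c - a

lemma vertexDecomposableOn (r : ℕ) (hcn : c ≤ n) (a : ℕ) :
    VertexDecomposableOn (gridGraph m n) (notchedRect r a c) := by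
  induction r generalizing c a with
  | zero => exact vertexDecomposableOn_of_forall_not_adj forall_not_adj_zero
  | succ r ih => exact vertexDecomposableOn_succ hcn (fun c hc => ih hc 0) a

end notchedRect

/-- the graph `G(m,n)` is vertex decomposable. -/
theorem stmt7 (m n : ℕ) :
    VertexDecomposableOn (gridGraph m n) Set.univ := by
  have huniv : (Set.univ : Set (Fin m × Fin n)) = notchedRect m 0 n := by
    ext v
    simp only [notchedRect, Set.mem_univ, Set.mem_ofPred_eq, true_iff]
    omega
  rw [huniv]
  exact notchedRect.vertexDecomposableOn m le_rfl 0
end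

section
/- In a down-left graph G = G(m,n,a,b) with a_i + 1 < b_i for all i and a_i + 1 < b_{i-1} for 2 ≤ i ≤ m, let i be the largest index with a_i = 0 and suppose i > 1 and b_{i-1} > 2. Then the vertex x = x_{i,1} satisfies N[x_{i-1,2}] ⊆ N[x], and consequently for any induced matching M of G \ N[x], the set M ∪ {{x, x_{i-1,2}}} is an induced matching of G; hence im(G \ N[x]) + 1 ≤ im(G). -/
/-!
Here `x = x_{i,1}` and `y = x_{i-1,2}` are adjacent. A neighbour of `y` either lies up and to
the right of `y`, hence also of `x`, or lies in column `1` in a row `k ≥ i`; since `a_k ≥ 1`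
for `k > i`, the only such vertex of `G` is `x` itself. So `N[y] ⊆ N[x]` in `G`, every vertex
of an induced matching of `G \ N[x]` is non-adjacent to both `x` and `y`, and the edge `xy`
can be added to it.
-/

section InducedMatching

variable {V : Type*} {G : SimpleGraph V} {A : Set V} {M : Set (Sym2 V)} {x y : V}

theorem IsInducedMatchingOn.notMem_and_forall_not_adj_of_dominated
    (hM : IsInducedMatchingOn G (A \ ({x} ∪ {v | G.Adj x v})) M) (hxy : G.Adj x y)
    (hdom : ∀ v ∈ A, G.Adj y v → v = x ∨ G.Adj x v) {e : Sym2 V} (he : e ∈ M) {w : V}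
    (hw : w ∈ e) : w ∉ s(x, y) ∧ ∀ z ∈ s(x, y), ¬G.Adj z w := by
  obtain ⟨hwA, hwN⟩ := hM.1 e he w hw
  simp only [Set.mem_union, Set.mem_singleton_iff, Set.mem_ofPred_eq, not_or] at hwN
  obtain ⟨hwx, hxw⟩ := hwN
  have hyw : ¬G.Adj y w := fun h => (hdom w hwA h).elim hwx hxw
  refine ⟨?_, ?_⟩
  · intro hw
    rcases Sym2.mem_iff.mp hw with rfl | rfl
    exacts [hwx rfl, hxw hxy]
  · intro z hz
    rcases Sym2.mem_iff.mp hz with rfl | rfl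
    exacts [hxw, hyw]

theorem IsInducedMatchingOn.insert_of_dominated
    (hM : IsInducedMatchingOn G (A \ ({x} ∪ {v | G.Adj x v})) M) (hxA : x ∈ A) (hyA : y ∈ A)
    (hxy : G.Adj x y) (hdom : ∀ v ∈ A, G.Adj y v → v = x ∨ G.Adj x v) :
    IsInducedMatchingOn G A (insert s(x, y) M) := by
  have hfar {e : Sym2 V} (he : e ∈ M) {w : V} (hw : w ∈ e) :=
    hM.notMem_and_forall_not_adj_of_dominated hxy hdom he hw
  obtain ⟨hMA, hMadj, hMdisj, hMind⟩ := hM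
  refine ⟨?_, ?_, ?_, ?_⟩
  · rintro e (rfl | he) v hv
    · rcases Sym2.mem_iff.mp hv with rfl | rfl
      exacts [hxA, hyA]
    · exact (hMA e he v hv).1
  · rintro e (rfl | he)
    exacts [⟨x, y, hxy, rfl⟩, hMadj e he]
  · rintro e (rfl | he) f (rfl | hf) hef v hv
    · exact absurd rfl hef
    · exact fun hvf => (hfar hf hvf).1 hv
    · exact (hfar he hv).1
    · exact hMdisj e he f hf hef v hv
  · rintro u v ⟨e, he | he, hue⟩ ⟨f, hf | hf, hvf⟩ huv
    · subst he hf
      left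
      rcases Sym2.mem_iff.mp hue with rfl | rfl <;> rcases Sym2.mem_iff.mp hvf with rfl | rfl
      exacts [absurd huv G.irrefl, rfl, Sym2.eq_swap, absurd huv G.irrefl]
    · subst he
      exact absurd huv ((hfar hf hvf).2 u hue)
    · subst hf
      exact absurd huv.symm ((hfar he hue).2 v hvf)
    · exact Or.inr (hMind u v ⟨e, he, hue⟩ ⟨f, hf, hvf⟩ huv)

theorem IsInducedMatchingOn.ncard_insert
    (hM : IsInducedMatchingOn G (A \ ({x} ∪ {v | G.Adj x v})) M) (hfin : M.Finite) :
    (insert s(x, y) M).ncard = M.ncard + 1 :=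
  Set.ncard_insert_of_notMem
    (fun h => (hM.1 _ h x (Sym2.mem_mk_left x y)).2 (Or.inl rfl)) hfin

end InducedMatching

theorem gridGraph_adj_or_col_zero_of_adj {m n : ℕ} {x y v : Fin m × Fin n}
    (hrow : y.1.1 + 1 = x.1.1) (hx : x.2.1 = 0) (hy : y.2.1 = 1)
    (hyv : (gridGraph m n).Adj y v) : (gridGraph m n).Adj x v ∨ (x.1 ≤ v.1 ∧ v.2.1 = 0) := by
  rcases hyv with ⟨hyv1, hyv2⟩ | ⟨hvy1, hvy2⟩
  · right
    rw [Fin.lt_def] at hyv1 hyv2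
    exact ⟨Fin.le_def.mpr (by omega), by omega⟩
  · left
    right
    rw [Fin.lt_def] at hvy1 hvy2
    exact ⟨Fin.lt_def.mpr (by omega), Fin.lt_def.mpr (by omega)⟩

theorem gridGraph_adj_of_adj_of_lastZeroRow {m n : ℕ} {a b : ℕ → ℕ} {A : Set (Fin m × Fin n)}
    (hA : A = {p : Fin m × Fin n |
      a (p.1.1 + 1) < p.2.1 + 1 ∧ p.2.1 + 1 < b (p.1.1 + 1)})
    {i : ℕ} (hlargest : ∀ k, i < k → k ≤ m → a k ≠ 0) {x y : Fin m × Fin n}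
    (hx : x.1.1 + 1 = i ∧ x.2.1 = 0) (hy : y.1.1 + 1 = x.1.1 ∧ y.2.1 = 1) :
    ∀ v ∈ A, (gridGraph m n).Adj y v → v = x ∨ (gridGraph m n).Adj x v := by
  intro v hvA hyv
  rcases gridGraph_adj_or_col_zero_of_adj hy.1 hx.2 hy.2 hyv with hxv | ⟨hxv, hv0⟩
  · exact Or.inr hxv
  · have hav : a (v.1.1 + 1) = 0 := by rw [hA] at hvA; have := hvA.1; omega
    have hvrow : v.1.1 + 1 ≤ i := by
      by_contra
      exact hlargest (v.1.1 + 1) (by omega) v.1.2 hav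
    rw [Fin.le_def] at hxv
    exact Or.inl (Prod.ext (Fin.ext (by omega)) (Fin.ext (by omega)))

theorem stmt11_general (m n : ℕ)
    (a b : ℕ → ℕ)
    (hamono : ∀ i, 1 ≤ i → i < m → a i ≤ a (i + 1))
    (A : Set (Fin m × Fin n))
    (hA : A = {p : Fin m × Fin n |
      a (p.1.1 + 1) < p.2.1 + 1 ∧ p.2.1 + 1 < b (p.1.1 + 1)})
    (hab1 : ∀ i, 1 ≤ i → i ≤ m → a i + 1 < b i)
    (i : ℕ) (hai : a i = 0)
    (hlargest : ∀ k, i < k → k ≤ m → a k ≠ 0)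
    (hi2 : 1 < i) (hbi : 2 < b (i - 1))
    (x y : Fin m × Fin n)
    (hx : x.1.1 = i - 1 ∧ x.2.1 = 0)
    (hy : y.1.1 = i - 2 ∧ y.2.1 = 1)
    (Nx : Set (Fin m × Fin n))
    (hNx : Nx = {x} ∪ {v | (gridGraph m n).Adj x v}) :
    (∀ v ∈ A, (v = y ∨ (gridGraph m n).Adj y v) → (v = x ∨ (gridGraph m n).Adj x v)) ∧
    (∀ M : Set (Sym2 (Fin m × Fin n)),
      IsInducedMatchingOn (gridGraph m n) (A \ Nx) M →
      IsInducedMatchingOn (gridGraph m n) A (insert s(x, y) M)) ∧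
    (∀ k : ℕ,
      (∃ M : Set (Sym2 (Fin m × Fin n)),
        IsInducedMatchingOn (gridGraph m n) (A \ Nx) M ∧ M.ncard = k) →
      ∃ M' : Set (Sym2 (Fin m × Fin n)),
        IsInducedMatchingOn (gridGraph m n) A M' ∧ M'.ncard = k + 1) := by
  subst hNx
  obtain ⟨hx1, hx2⟩ := hx
  obtain ⟨hy1, hy2⟩ := hy
  have hxm : x.1.1 < m := x.1.2
  have hai' : a (i - 1) = 0 := by
    have := hamono (i - 1) (by omega) (by omega)
    rwa [Nat.sub_add_cancel hi2.le, hai, Nat.le_zero] at this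
  have hxA : x ∈ A := by
    have := hab1 i (by omega) (by omega)
    rw [hA, Set.mem_ofPred_eq, hx1, Nat.sub_add_cancel hi2.le, hx2, hai]
    omega
  have hyA : y ∈ A := by
    rw [hA, Set.mem_ofPred_eq, hy1, show i - 2 + 1 = i - 1 by omega, hy2, hai']
    omega
  have hxy : (gridGraph m n).Adj x y :=
    Or.inr ⟨Fin.lt_def.mpr (by omega), Fin.lt_def.mpr (by omega)⟩
  have hdom := gridGraph_adj_of_adj_of_lastZeroRow (x := x) (y := y) hA hlargest
    ⟨by omega, hx2⟩ ⟨by omega, hy2⟩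
  have hinsert := fun M (hM : IsInducedMatchingOn _ _ M) => hM.insert_of_dominated hxA hyA hxy hdom
  refine ⟨fun v hvA hv => hv.elim (fun hvy => hvy ▸ Or.inr hxy) (hdom v hvA), hinsert, ?_⟩
  rintro k ⟨M, hM, rfl⟩
  exact ⟨_, hinsert M hM, hM.ncard_insert M.toFinite⟩

/-- in a down-left graph with `a_i + 1 < b_i` for all `i` and
`a_i + 1 < b_{i-1}` for `2 ≤ i ≤ m`, let `i` be the largest index with `a_i = 0`,
and suppose `i > 1` and `b_{i-1} > 2`.  Let `x = x_{i,1}` and `y = x_{i-1,2}`.  Then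
`N[y] ⊆ N[x]` (within the graph), every induced matching `M` of `G \ N[x]` yields the
induced matching `M ∪ {{x,y}}` of `G`, and hence `im(G \ N[x]) + 1 ≤ im(G)`. -/
theorem stmt11 (m n : ℕ) (hm : 1 ≤ m) (hmn : m ≤ n)
    (a b : ℕ → ℕ)
    (ha1 : a 1 = 0)
    (hamono : ∀ i, 1 ≤ i → i < m → a i ≤ a (i + 1))
    (ham : a m < n)
    (hb1 : 1 < b 1)
    (hbmono : ∀ i, 1 ≤ i → i < m → b i ≤ b (i + 1))
    (hbm : b m = n + 1)
    (hab : ∀ i, 2 ≤ i → i ≤ m - 1 → a i < b i)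
    (A : Set (Fin m × Fin n))
    (hA : A = {p : Fin m × Fin n |
      a (p.1.1 + 1) < p.2.1 + 1 ∧ p.2.1 + 1 < b (p.1.1 + 1)})
    (hab1 : ∀ i, 1 ≤ i → i ≤ m → a i + 1 < b i)
    (hab2 : ∀ i, 2 ≤ i → i ≤ m → a i + 1 < b (i - 1))
    (i : ℕ) (hi1 : 1 ≤ i) (him : i ≤ m) (hai : a i = 0)
    (hlargest : ∀ k, i < k → k ≤ m → a k ≠ 0)
    (hi2 : 1 < i) (hbi : 2 < b (i - 1))
    (x y : Fin m × Fin n)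
    (hx : x.1.1 = i - 1 ∧ x.2.1 = 0)
    (hy : y.1.1 = i - 2 ∧ y.2.1 = 1)
    (Nx : Set (Fin m × Fin n))
    (hNx : Nx = {x} ∪ {v | (gridGraph m n).Adj x v}) :
    (∀ v ∈ A, (v = y ∨ (gridGraph m n).Adj y v) → (v = x ∨ (gridGraph m n).Adj x v)) ∧
    (∀ M : Set (Sym2 (Fin m × Fin n)),
      IsInducedMatchingOn (gridGraph m n) (A \ Nx) M →
      IsInducedMatchingOn (gridGraph m n) A (insert s(x, y) M)) ∧
    (∀ k : ℕ,
      (∃ M : Set (Sym2 (Fin m × Fin n)),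
        IsInducedMatchingOn (gridGraph m n) (A \ Nx) M ∧ M.ncard = k) →
      ∃ M' : Set (Sym2 (Fin m × Fin n)),
        IsInducedMatchingOn (gridGraph m n) A M' ∧ M'.ncard = k + 1) :=
  stmt11_general m n a b hamono A hA hab1 i hai hlargest hi2 hbi x y hx hy Nx hNx
end

section
/- Let M be a 0-1 matrix that avoids the 2×2 pattern [[1,1],[1,0]] and such that every 3×3 submatrix with at least eight entries equal to 1 has all nine entries equal to 1 (the (K_{3,3}\e)-free condition). Let M' be an all-ones submatrix of M on row set R and column set C with |R|, |C| ≥ 2. Suppose M_{s,t} = 1 where s ∉ R or t ∉ C, and there exist r ∈ R, c ∈ C with (r,c) ≠ (max R, max C), M_{r,c} = M_{s,c} = M_{r,t} = 1, and either (s < r and t > c) or (s > r and t < c). Then every entry of the submatrix of M on rows R ∪ {s} and columns C ∪ {t} equals 1. -/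
lemma sm3 {k : ℕ} (a b c : Fin k) (h1 : a < b) (h2 : b < c) : StrictMono ![a, b, c] := by
  intro x y hxy
  fin_cases x <;> fin_cases y <;> simp_all <;> exact h1.trans h2

def K33prop {m n : ℕ} (M : Fin m → Fin n → Bool) : Prop :=
  ∀ (r : Fin 3 → Fin m) (c : Fin 3 → Fin n), StrictMono r → StrictMono c →
      ∀ p q : Fin 3, (∀ p' q' : Fin 3, (p', q') ≠ (p, q) → M (r p') (c q') = true) →
        M (r p) (c q) = true

lemma K00 {m n : ℕ} (M : Fin m → Fin n → Bool) (hK33 : K33prop M)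
    (a b c : Fin m) (d e f : Fin n) (hab : a < b) (hbc : b < c)
    (hde : d < e) (hef : e < f)
    (hbd : M b d = true) (hbe : M b e = true) (hbf : M b f = true)
    (hcd : M c d = true) (hce : M c e = true) (hcf : M c f = true)
    (hae : M a e = true) (haf : M a f = true) : M a d = true := by
  have := hK33 ![a,b,c] ![d,e,f] (sm3 a b c hab hbc) (sm3 d e f hde hef) 0 0
    (by intro p' q' hne; fin_cases p' <;> fin_cases q' <;> simp_all)
  simpa using this

lemma K01 {m n : ℕ} (M : Fin m → Fin n → Bool) (hK33 : K33prop M)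
    (a b c : Fin m) (d e f : Fin n) (hab : a < b) (hbc : b < c)
    (hde : d < e) (hef : e < f)
    (had : M a d = true) (haf : M a f = true)
    (hbd : M b d = true) (hbe : M b e = true) (hbf : M b f = true)
    (hcd : M c d = true) (hce : M c e = true) (hcf : M c f = true) : M a e = true := by
  have := hK33 ![a,b,c] ![d,e,f] (sm3 a b c hab hbc) (sm3 d e f hde hef) 0 1
    (by intro p' q' hne; fin_cases p' <;> fin_cases q' <;> simp_all)
  simpa using this

lemma K02 {m n : ℕ} (M : Fin m → Fin n → Bool) (hK33 : K33prop M)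
    (a b c : Fin m) (d e f : Fin n) (hab : a < b) (hbc : b < c)
    (hde : d < e) (hef : e < f)
    (had : M a d = true) (hae : M a e = true)
    (hbd : M b d = true) (hbe : M b e = true) (hbf : M b f = true)
    (hcd : M c d = true) (hce : M c e = true) (hcf : M c f = true) : M a f = true := by
  have := hK33 ![a,b,c] ![d,e,f] (sm3 a b c hab hbc) (sm3 d e f hde hef) 0 2
    (by intro p' q' hne; fin_cases p' <;> fin_cases q' <;> simp_all)
  simpa using this

lemma K10 {m n : ℕ} (M : Fin m → Fin n → Bool) (hK33 : K33prop M)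
    (a b c : Fin m) (d e f : Fin n) (hab : a < b) (hbc : b < c)
    (hde : d < e) (hef : e < f)
    (had : M a d = true) (hae : M a e = true) (haf : M a f = true)
    (hbe : M b e = true) (hbf : M b f = true)
    (hcd : M c d = true) (hce : M c e = true) (hcf : M c f = true) : M b d = true := by
  have := hK33 ![a,b,c] ![d,e,f] (sm3 a b c hab hbc) (sm3 d e f hde hef) 1 0
    (by intro p' q' hne; fin_cases p' <;> fin_cases q' <;> simp_all)
  simpa using this

lemma aux15 (m n : ℕ) (M : Fin m → Fin n → Bool)
    (pat : ∀ (a a' : Fin m), a < a' → ∀ (b b' : Fin n), b < b' →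
      M a b = true → M a b' = true → M a' b = true → M a' b' = true)
    (hK33 : K33prop M)
    (R : Finset (Fin m)) (C : Finset (Fin n)) (hR : 2 ≤ R.card) (hC : 2 ≤ C.card)
    (hones : ∀ i ∈ R, ∀ j ∈ C, M i j = true)
    (s : Fin m) (t : Fin n) (hst : M s t = true)
    (r : Fin m) (c : Fin n) (hr : r ∈ R) (hc : c ∈ C)
    (hex : (∃ r2 ∈ R, r < r2) ∨ (∃ c2 ∈ C, c < c2))
    (hsc : M s c = true) (hrt : M r t = true)
    (hsr : s < r) (hct : c < t) :
    (∀ j ∈ C, M s j = true) ∧ (∀ i ∈ R, M i t = true) := by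
  have step1 : ∀ i ∈ R, s < i → M i t = true := fun i hi hsi =>
    pat s i hsi c t hct hsc hst (hones i hi c hc)
  by_cases hI : ∃ r2 ∈ R, r < r2
  · obtain ⟨r2, hr2, hrr2⟩ := hI
    have hr2t : M r2 t = true := step1 r2 hr2 (hsr.trans hrr2)
    have claim1 : ∀ j ∈ C, M s j = true := by
      intro j hj
      rcases eq_or_ne j t with rfl | hjt
      · exact hst
      rcases lt_trichotomy j c with h | rfl | h
      · exact K00 M hK33 s r r2 j c t hsr hrr2 h hct (hones r hr j hj) (hones r hr c hc)
          hrt (hones r2 hr2 j hj) (hones r2 hr2 c hc) hr2t hsc hst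
      · exact hsc
      · rcases lt_or_gt_of_ne hjt with h' | h'
        · exact K01 M hK33 s r r2 c j t hsr hrr2 h h' hsc hst (hones r hr c hc)
            (hones r hr j hj) hrt (hones r2 hr2 c hc) (hones r2 hr2 j hj) hr2t
        · exact K02 M hK33 s r r2 c t j hsr hrr2 hct h' hsc hst (hones r hr c hc) hrt
            (hones r hr j hj) (hones r2 hr2 c hc) hr2t (hones r2 hr2 j hj)
    have claim2 : ∀ i ∈ R, M i t = true := by
      intro i hi
      rcases lt_trichotomy i s with h | rfl | h
      · by_cases htC : t ∈ C
        · exact hones i hi t htC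
        · obtain ⟨c2, hc2, hc2c⟩ := Finset.exists_mem_ne (show 1 < C.card by omega) c
          have h1 : c2 ≠ t := fun e => htC (e ▸ hc2)
          rcases lt_trichotomy c2 c with h2 | h2 | h2
          · exact K02 M hK33 i s r c2 c t h hsr h2 hct (hones i hi c2 hc2) (hones i hi c hc)
              (claim1 c2 hc2) hsc hst (hones r hr c2 hc2) (hones r hr c hc) hrt
          · exact absurd h2 hc2c
          · rcases lt_or_gt_of_ne h1 with h3 | h3
            · exact K02 M hK33 i s r c c2 t h hsr h2 h3 (hones i hi c hc) (hones i hi c2 hc2)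
                hsc (claim1 c2 hc2) hst (hones r hr c hc) (hones r hr c2 hc2) hrt
            · exact K01 M hK33 i s r c t c2 h hsr hct h3 (hones i hi c hc) (hones i hi c2 hc2)
                hsc hst (claim1 c2 hc2) (hones r hr c hc) hrt (hones r hr c2 hc2)
      · exact hst
      · exact step1 i hi h
    exact ⟨claim1, claim2⟩
  · push_neg at hI
    obtain ⟨c2, hc2, hcc2⟩ : ∃ c2 ∈ C, c < c2 := by
      rcases hex with ⟨r2, hr2, hrr2⟩ | h
      · exact absurd hrr2 (not_lt.mpr (hI r2 hr2))
      · exact h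
    by_cases hIIa : ∃ i0 ∈ R, i0 < s
    · obtain ⟨i0, hi0, hi0s⟩ := hIIa
      have stepA : ∀ j ∈ C, c < j → M s j = true := fun j hj hcj =>
        pat i0 s hi0s c j hcj (hones i0 hi0 c hc) (hones i0 hi0 j hj) hsc
      have hsc2 : M s c2 = true := stepA c2 hc2 hcc2
      have claim2 : ∀ i ∈ R, M i t = true := by
        intro i hi
        rcases lt_trichotomy i s with h | rfl | h
        · by_cases htC : t ∈ C
          · exact hones i hi t htC
          · have h1 : c2 ≠ t := fun e => htC (e ▸ hc2)
            rcases lt_or_gt_of_ne h1 with h3 | h3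
            · exact K02 M hK33 i s r c c2 t h hsr hcc2 h3 (hones i hi c hc)
                (hones i hi c2 hc2) hsc hsc2 hst (hones r hr c hc) (hones r hr c2 hc2) hrt
            · exact K01 M hK33 i s r c t c2 h hsr hct h3 (hones i hi c hc)
                (hones i hi c2 hc2) hsc hst hsc2 (hones r hr c hc) hrt (hones r hr c2 hc2)
        · exact hst
        · exact step1 i hi h
      have claim1 : ∀ j ∈ C, M s j = true := by
        intro j hj
        rcases lt_trichotomy j c with h | rfl | h
        · exact K10 M hK33 i0 s r j c t hi0s hsr h hct (hones i0 hi0 j hj)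
            (hones i0 hi0 c hc) (claim2 i0 hi0) hsc hst (hones r hr j hj) (hones r hr c hc) hrt
        · exact hsc
        · exact stepA j hj h
      exact ⟨claim1, claim2⟩
    · push_neg at hIIa
      have claim2 : ∀ i ∈ R, M i t = true := by
        intro i hi
        rcases eq_or_lt_of_le (hIIa i hi) with h | h
        · exact h ▸ hst
        · exact step1 i hi h
      have claim1 : ∀ j ∈ C, M s j = true := by
        intro j hj
        obtain ⟨i1, hi1, hi1r⟩ := Finset.exists_mem_ne (by omega : 1 < R.card) r
        have hi1lt : i1 < r := lt_of_le_of_ne (hI i1 hi1) hi1r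
        rcases eq_or_lt_of_le (hIIa i1 hi1) with h | hsi1
        · exact hones s (h ▸ hi1) j hj
        · rcases eq_or_ne j t with rfl | hjt
          · exact hst
          rcases lt_trichotomy j c with h | rfl | h
          · exact K00 M hK33 s i1 r j c t hsi1 hi1lt h hct (hones i1 hi1 j hj)
              (hones i1 hi1 c hc) (step1 i1 hi1 hsi1) (hones r hr j hj) (hones r hr c hc)
              hrt hsc hst
          · exact hsc
          · rcases lt_or_gt_of_ne hjt with h' | h'
            · exact K01 M hK33 s i1 r c j t hsi1 hi1lt h h' hsc hst (hones i1 hi1 c hc)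
                (hones i1 hi1 j hj) (step1 i1 hi1 hsi1) (hones r hr c hc) (hones r hr j hj) hrt
            · exact K02 M hK33 s i1 r c t j hsi1 hi1lt hct h' hsc hst (hones i1 hi1 c hc)
                (step1 i1 hi1 hsi1) (hones i1 hi1 j hj) (hones r hr c hc) hrt (hones r hr j hj)
      exact ⟨claim1, claim2⟩


/-- the technical lemma on biadjacency matrices of
`(K_{3,3} \ e)`-free chordal bipartite graphs.  `M` avoids the 2×2 pattern
`[[1,1],[1,0]]` and every 3×3 submatrix with at least eight `1`s is all `1`s.  If
`M'` is an all-ones submatrix on rows `R` and columns `C` (`|R|, |C| ≥ 2`), and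
`M_{s,t} = 1` with `s ∉ R` or `t ∉ C`, and there are `r ∈ R`, `c ∈ C` with
`(r,c) ≠ (max R, max C)`, `M_{r,c} = M_{s,c} = M_{r,t} = 1` and (`s < r` and `t > c`)
or (`s > r` and `t < c`), then the submatrix on rows `R ∪ {s}` and columns `C ∪ {t}`
is all `1`s. -/
theorem stmt15 (m n : ℕ) (M : Fin m → Fin n → Bool)
    (havoid : ¬ ∃ (r r' : Fin m) (c c' : Fin n), r < r' ∧ c < c' ∧
        M r c = true ∧ M r c' = true ∧ M r' c = true ∧ M r' c' = false)
    (hK33 : ∀ (r : Fin 3 → Fin m) (c : Fin 3 → Fin n), StrictMono r → StrictMono c →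
      ∀ p q : Fin 3, (∀ p' q' : Fin 3, (p', q') ≠ (p, q) → M (r p') (c q') = true) →
        M (r p) (c q) = true)
    (R : Finset (Fin m)) (C : Finset (Fin n)) (hR : 2 ≤ R.card) (hC : 2 ≤ C.card)
    (hones : ∀ i ∈ R, ∀ j ∈ C, M i j = true)
    (s : Fin m) (t : Fin n) (hst : M s t = true)
    (hout : s ∉ R ∨ t ∉ C)
    (r : Fin m) (c : Fin n) (hr : r ∈ R) (hc : c ∈ C)
    (hmax : ¬ (r = R.max' (Finset.card_pos.mp (by omega)) ∧
               c = C.max' (Finset.card_pos.mp (by omega))))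
    (hsc : M s c = true) (hrt : M r t = true)
    (hpos : (s < r ∧ c < t) ∨ (r < s ∧ t < c)) :
    ∀ i ∈ insert s R, ∀ j ∈ insert t C, M i j = true := by
  have pat : ∀ (a a' : Fin m), a < a' → ∀ (b b' : Fin n), b < b' →
      M a b = true → M a b' = true → M a' b = true → M a' b' = true := by
    intro a a' h1 b b' h2 e1 e2 e3
    by_contra hcon
    exact havoid ⟨a, a', b, b', h1, h2, e1, e2, e3, by simpa using hcon⟩
  have hex : (∃ r2 ∈ R, r < r2) ∨ (∃ c2 ∈ C, c < c2) := by
    by_contra hcon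
    push_neg at hcon
    obtain ⟨h1, h2⟩ := hcon
    exact hmax ⟨le_antisymm (Finset.le_max' R r hr) (Finset.max'_le _ _ _ h1),
      le_antisymm (Finset.le_max' C c hc) (Finset.max'_le _ _ _ h2)⟩
  intro i hi j hj
  rw [Finset.mem_insert] at hi hj
  rcases hpos with ⟨hsr, hct⟩ | ⟨hrs, htc⟩
  · obtain ⟨claim1, claim2⟩ := aux15 m n M pat hK33 R C hR hC hones s t hst r c hr hc
      hex hsc hrt hsr hct
    rcases hi with rfl | hi <;> rcases hj with rfl | hj
    · exact hst
    · exact claim1 j hj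
    · exact claim2 i hi
    · exact hones i hi j hj
  · set N : Fin n → Fin m → Bool := fun j i => M i j with hN
    have pat' : ∀ (a a' : Fin n), a < a' → ∀ (b b' : Fin m), b < b' →
        N a b = true → N a b' = true → N a' b = true → N a' b' = true :=
      fun a a' h1 b b' h2 e1 e2 e3 => pat b b' h2 a a' h1 e1 e3 e2
    have hK33' : K33prop N := by
      intro rr cc hrr hcc p q h
      exact hK33 cc rr hcc hrr q p (fun p' q' hne =>
        h q' p' (fun e => hne (by
          have e1 : p' = q := congrArg Prod.snd e
          have e2 : q' = p := congrArg Prod.fst e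
          rw [e1, e2])))
    obtain ⟨claim1, claim2⟩ := aux15 n m N pat' hK33' C R hC hR
      (fun j hj i hi => hones i hi j hj) t s hst c r hc hr hex.symm hrt hsc htc hrs
    rcases hi with rfl | hi <;> rcases hj with rfl | hj
    · exact hst
    · exact claim2 j hj
    · exact claim1 i hi
    · exact hones i hi j hj
end

section
/- Let M be a 0-1 matrix avoiding the 2×2 pattern [[1,1],[1,0]] and such that every 3×3 submatrix with at least eight 1's is all 1's. Define the graph H whose vertices are pairs (i,j) with M_{i,j} = 1, with (a,d) adjacent to (c,b) iff a < c, b < d, and M_{a,b} = M_{a,d} = M_{c,b} = M_{c,d} = 1. Then every connected component of H is either an isolated vertex or isomorphic to the graph G(p,q) with its isolated vertices removed, for some p, q ≥ 2, where G(p,q) is the graph on a p×q grid with (i,j) ~ (k,ℓ) iff i < k and j > ℓ. -/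
namespace SimpleGraph

variable {V W : Type*} {G : SimpleGraph V} {G' : SimpleGraph W}

theorem Reachable.mem_of_adj_mem {s : Set V} (hs : ∀ ⦃x y⦄, x ∈ s → G.Adj x y → y ∈ s)
    {u v : V} (h : G.Reachable u v) (hu : u ∈ s) : v ∈ s := by
  rw [reachable_iff_reflTransGen] at h
  induction h with
  | refl => exact hu
  | tail _ hadj ih => exact hs ih hadj

theorem Reachable.exists_adj {u v : V} (h : G.Reachable u v) (hu : ∃ w, G.Adj u w) :
    ∃ w, G.Adj v w :=
  h.mem_of_adj_mem (s := {x | ∃ w, G.Adj x w}) (fun x _ _ hxy => ⟨x, hxy.symm⟩) hu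

noncomputable def Embedding.induceImage (φ : G ↪g G') (s : Set V) :
    G.induce s ≃g G'.induce (φ '' s) where
  toEquiv := Equiv.Set.image φ s φ.injective
  map_rel_iff' := by simp

theorem Embedding.setOf_reachable_eq_image (φ : G ↪g G')
    (hG : ∀ a b, (∃ w, G.Adj a w) → (∃ w, G.Adj b w) → G.Reachable a b)
    {v : W} (hv : ∃ w, G'.Adj v w) (hφ : ∀ x, G'.Reachable v x → x ∈ Set.range φ) :
    {x | G'.Reachable v x} = φ '' {a | ∃ w, G.Adj a w} := by
  ext x
  constructor
  · intro hx
    obtain ⟨a, rfl⟩ := hφ x hx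
    obtain ⟨y, hy⟩ := hx.exists_adj hv
    obtain ⟨b, rfl⟩ := hφ y (hx.trans hy.reachable)
    exact ⟨a, ⟨b, φ.map_adj_iff.mp hy⟩, rfl⟩
  · rintro ⟨a, ha, rfl⟩
    obtain ⟨w, hw⟩ := hv
    obtain ⟨a₀, rfl⟩ := hφ _ .rfl
    obtain ⟨b₀, rfl⟩ := hφ w hw.reachable
    exact (hG a₀ a ⟨b₀, φ.map_adj_iff.mp hw⟩ ha).map φ.toHom

end SimpleGraph

section AntidiagPair

variable {α β α' β' : Type*}

def AntidiagPair [LT α] [LT β] (u v : α × β) : Prop :=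
  (u.1 < v.1 ∧ v.2 < u.2) ∨ (v.1 < u.1 ∧ u.2 < v.2)

variable [Preorder α] [Preorder β] {u v : α × β}

theorem AntidiagPair.symm (h : AntidiagPair u v) : AntidiagPair v u := Or.symm h

theorem AntidiagPair.fst_ne (h : AntidiagPair u v) : u.1 ≠ v.1 := by
  rcases h with ⟨h, -⟩ | ⟨h, -⟩
  exacts [h.ne, h.ne']

theorem AntidiagPair.snd_ne (h : AntidiagPair u v) : u.2 ≠ v.2 := by
  rcases h with ⟨-, h⟩ | ⟨-, h⟩
  exacts [h.ne', h.ne]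

theorem antidiagPair_map_iff [Preorder α'] [Preorder β'] (e : α ↪o α') (f : β ↪o β') :
    AntidiagPair (Prod.map e f u) (Prod.map e f v) ↔ AntidiagPair u v := by
  simp [AntidiagPair]

end AntidiagPair

theorem gridGraph_reachable {p q : ℕ} {a b : Fin p × Fin q}
    (ha : ∃ w, (gridGraph p q).Adj a w) (hb : ∃ w, (gridGraph p q).Adj b w) :
    (gridGraph p q).Reachable a b := by
  obtain ⟨w, hw⟩ := ha
  have hp : 2 ≤ p := by rcases hw with ⟨h, -⟩ | ⟨h, -⟩ <;> omega
  have hq : 2 ≤ q := by rcases hw with ⟨-, h⟩ | ⟨-, h⟩ <;> omega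
  let lowerLeft : Fin p × Fin q := (⟨p - 1, by omega⟩, ⟨0, by omega⟩)
  let upperRight : Fin p × Fin q := (⟨0, by omega⟩, ⟨q - 1, by omega⟩)
  have adj_lowerLeft : ∀ c : Fin p × Fin q, (c.1 : ℕ) < p - 1 → 0 < (c.2 : ℕ) →
      (gridGraph p q).Adj c lowerLeft :=
    fun c h₁ h₂ => Or.inl ⟨h₁, h₂⟩
  have adj_upperRight : ∀ c : Fin p × Fin q, 0 < (c.1 : ℕ) → (c.2 : ℕ) < q - 1 →
      (gridGraph p q).Adj c upperRight :=
    fun c h₁ h₂ => Or.inr ⟨h₁, h₂⟩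
  have hcorners : (gridGraph p q).Adj lowerLeft upperRight :=
    adj_upperRight _ (show 0 < p - 1 by omega) (show 0 < q - 1 by omega)
  suffices key : ∀ c, (∃ w, (gridGraph p q).Adj c w) → (gridGraph p q).Reachable lowerLeft c from
    (key a ⟨w, hw⟩).symm.trans (key b hb)
  rintro c ⟨w, hw⟩
  by_cases hc : (c.1 : ℕ) < p - 1 ∧ 0 < (c.2 : ℕ)
  · exact (adj_lowerLeft c hc.1 hc.2).symm.reachable
  · have hc' : 0 < (c.1 : ℕ) ∧ (c.2 : ℕ) < q - 1 := by
      rcases hw with ⟨h₁, h₂⟩ | ⟨h₁, h₂⟩ <;> omega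
    exact hcorners.reachable.trans (adj_upperRight c hc'.1 hc'.2).symm.reachable

section RectangleGraph

variable {α β : Type*} {M : α → β → Bool}

def OnesRect (M : α → β → Bool) (u v : α × β) : Prop :=
  M u.1 v.2 = true ∧ M v.1 u.2 = true

theorem OnesRect.symm {u v : α × β} (h : OnesRect M u v) : OnesRect M v u := And.symm h

variable [LinearOrder α] [LinearOrder β]

def AvoidsCorner (M : α → β → Bool) : Prop :=
  ∀ ⦃r r' c c'⦄, r < r' → c < c' →
    M r c = true → M r c' = true → M r' c = true → M r' c' = true

def EightOnesClosed (M : α → β → Bool) : Prop :=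
  ∀ (r : Fin 3 → α) (c : Fin 3 → β), StrictMono r → StrictMono c →
    ∀ p q : Fin 3, (∀ p' q' : Fin 3, (p', q') ≠ (p, q) → M (r p') (c q') = true) →
      M (r p) (c q) = true

theorem exists_strictMono_fin_three {x₁ x₂ x₃ : α} (h₁₂ : x₁ ≠ x₂) (h₁₃ : x₁ ≠ x₃)
    (h₂₃ : x₂ ≠ x₃) : ∃ r : Fin 3 → α, StrictMono r ∧ Set.range r = {x₁, x₂, x₃} := by
  have hcard : ({x₁, x₂, x₃} : Finset α).card = 3 := by
    rw [Finset.card_insert_of_notMem (by simp [h₁₂, h₁₃]), Finset.card_pair h₂₃]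
  exact ⟨_, (Finset.orderEmbOfFin _ hcard).strictMono, by simp [Finset.range_orderEmbOfFin]⟩

theorem EightOnesClosed.eq_true_of_ne (hK : EightOnesClosed M) {x₁ x₂ x₃ : α} {y₁ y₂ y₃ : β}
    (hx₁₂ : x₁ ≠ x₂) (hx₁₃ : x₁ ≠ x₃) (hx₂₃ : x₂ ≠ x₃)
    (hy₁₂ : y₁ ≠ y₂) (hy₁₃ : y₁ ≠ y₃) (hy₂₃ : y₂ ≠ y₃)
    (h : ∀ i ∈ ({x₁, x₂, x₃} : Set α), ∀ j ∈ ({y₁, y₂, y₃} : Set β),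
      (i, j) ≠ (x₁, y₁) → M i j = true) :
    M x₁ y₁ = true := by
  obtain ⟨r, hr, hr'⟩ := exists_strictMono_fin_three hx₁₂ hx₁₃ hx₂₃
  obtain ⟨c, hc, hc'⟩ := exists_strictMono_fin_three hy₁₂ hy₁₃ hy₂₃
  obtain ⟨p, rfl⟩ : x₁ ∈ Set.range r := by simp [hr']
  obtain ⟨q, rfl⟩ : y₁ ∈ Set.range c := by simp [hc']
  refine hK r c hr hc p q fun p' q' hne => h _ (hr' ▸ ⟨p', rfl⟩) _ (hc' ▸ ⟨q', rfl⟩) ?_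
  intro hpq
  simp only [Prod.mk.injEq] at hpq
  exact hne (Prod.ext (hr.injective hpq.1) (hc.injective hpq.2))

theorem EightOnesClosed.eq_true_of_rect (hK : EightOnesClosed M) {r s t : α} {c d e : β}
    (hrs : r ≠ s) (hcd : c ≠ d)
    (hrc : M r c = true) (hrd : M r d = true) (hsc : M s c = true) (hsd : M s d = true)
    (htc : M t c = true) (htd : M t d = true) (hre : M r e = true) (hse : M s e = true) :
    M t e = true := by
  rcases eq_or_ne t r with rfl | htr
  · exact hre
  rcases eq_or_ne t s with rfl | hts
  · exact hse
  rcases eq_or_ne e c with rfl | hec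
  · exact htc
  rcases eq_or_ne e d with rfl | hed
  · exact htd
  refine hK.eq_true_of_ne htr hts hrs hec hed hcd ?_
  rintro i (rfl | rfl | rfl) j (rfl | rfl | rfl) hne <;> first | assumption | exact absurd rfl hne

def rectangleGraph (M : α → β → Bool) : SimpleGraph {u : α × β // M u.1 u.2 = true} where
  Adj u v := AntidiagPair u.1 v.1 ∧ OnesRect M u.1 v.1
  symm := ⟨fun _ _ h => ⟨h.1.symm, h.2.symm⟩⟩
  loopless := ⟨fun _ h => h.1.fst_ne rfl⟩

namespace rectangleGraph

variable {y z w : {u : α × β // M u.1 u.2 = true}}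

theorem eq_true_of_adj_adj (hM : AvoidsCorner M) (hK : EightOnesClosed M)
    (hyz : (rectangleGraph M).Adj y z) (hzw : (rectangleGraph M).Adj z w) :
    M y.1.1 w.1.2 = true := by
  obtain ⟨y, myy⟩ := y
  obtain ⟨z, mzz⟩ := z
  obtain ⟨w, mww⟩ := w
  -- `hM` only fills bottom-right corners of rectangles; where `(y.1, w.2)` is not one, it fills
  -- `(w.1, y.2)` instead and the 3 × 3 condition then yields `(y.1, w.2)`.
  obtain ⟨h₁ | h₁, myz, mzy⟩ := hyz <;> obtain ⟨h₂ | h₂, mzw, mwz⟩ := hzw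
  · exact hK.eq_true_of_rect h₂.1.ne h₁.2.ne mzz mzy mwz (hM h₂.1 h₁.2 mzz mzy mwz)
      myz myy mzw mww
  · rcases lt_trichotomy w.1 y.1 with h | h | h
    · exact hM h h₂.2 mwz mww myz
    · rw [← h]; exact mww
    · exact hK.eq_true_of_rect h₂.1.ne' h₁.2.ne mzz mzy mwz (hM h h₁.2 myz myy mwz)
        myz myy mzw mww
  · rcases lt_trichotomy w.2 y.2 with h | h | h
    · exact hK.eq_true_of_rect h₂.1.ne h₁.2.ne' mzz mzy mwz (hM h₂.1 h mzw mzy mww)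
        myz myy mzw mww
    · rw [h]; exact myy
    · exact hM h₁.1 h mzy mzw myy
  · exact hM h₁.1 h₂.2 mzz mzw myz

theorem onesRect_of_adj_adj (hM : AvoidsCorner M) (hK : EightOnesClosed M)
    (hyz : (rectangleGraph M).Adj y z) (hzw : (rectangleGraph M).Adj z w) :
    OnesRect M y.1 w.1 :=
  ⟨eq_true_of_adj_adj hM hK hyz hzw, eq_true_of_adj_adj hM hK hzw.symm hyz.symm⟩

theorem onesRect_of_adj_adj_of_onesRect (hM : AvoidsCorner M) (hK : EightOnesClosed M)
    {u : α × β} (hyz : (rectangleGraph M).Adj y z) (hzw : (rectangleGraph M).Adj z w)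
    (hy : OnesRect M u y.1) (hz : OnesRect M u z.1) : OnesRect M u w.1 := by
  obtain ⟨myw, mwy⟩ := onesRect_of_adj_adj hM hK hyz hzw
  obtain ⟨hyz', myz, mzy⟩ := hyz
  obtain ⟨mzw, mwz⟩ := hzw.2
  exact ⟨hK.eq_true_of_rect hyz'.fst_ne hyz'.snd_ne y.2 myz mzy z.2 hy.1 hz.1 myw mzw,
    hK.eq_true_of_rect hyz'.fst_ne hyz'.snd_ne y.2 myz mzy z.2 mwy mwz hy.2 hz.2⟩

theorem onesRect_of_reachable (hM : AvoidsCorner M) (hK : EightOnesClosed M)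
    (h : (rectangleGraph M).Reachable y z) : OnesRect M y.1 z.1 := by
  let linked : Set {u : α × β // M u.1 u.2 = true} :=
    {x | OnesRect M y.1 x.1 ∧ ∀ w, (rectangleGraph M).Adj x w → OnesRect M y.1 w.1}
  refine (h.mem_of_adj_mem (s := linked) ?_ ⟨⟨y.2, y.2⟩, fun w hw => hw.2⟩).1
  rintro x x' ⟨hx, hxN⟩ hxx'
  exact ⟨hxN x' hxx', fun w hw => onesRect_of_adj_adj_of_onesRect hM hK hxx' hw hx (hxN x' hxx')⟩

def gridEmbedding (R : Finset α) (C : Finset β) (h : ∀ r ∈ R, ∀ c ∈ C, M r c = true) :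
    gridGraph R.card C.card ↪g rectangleGraph M where
  toFun a := ⟨Prod.map (R.orderEmbOfFin rfl) (C.orderEmbOfFin rfl) a,
    h _ (R.orderEmbOfFin_mem rfl _) _ (C.orderEmbOfFin_mem rfl _)⟩
  inj' _ _ hab := ((R.orderEmbOfFin rfl).injective.prodMap (C.orderEmbOfFin rfl).injective)
    (congrArg Subtype.val hab)
  map_rel_iff' :=
    (and_iff_left ⟨h _ (R.orderEmbOfFin_mem rfl _) _ (C.orderEmbOfFin_mem rfl _),
      h _ (R.orderEmbOfFin_mem rfl _) _ (C.orderEmbOfFin_mem rfl _)⟩).trans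
      (antidiagPair_map_iff _ _)

theorem mem_range_gridEmbedding {R : Finset α} {C : Finset β}
    {h : ∀ r ∈ R, ∀ c ∈ C, M r c = true} {x : {u : α × β // M u.1 u.2 = true}}
    (hr : x.1.1 ∈ R) (hc : x.1.2 ∈ C) : x ∈ Set.range (gridEmbedding R C h) := by
  obtain ⟨i, hi⟩ : x.1.1 ∈ Set.range (R.orderEmbOfFin rfl) := by
    rwa [Finset.range_orderEmbOfFin]
  obtain ⟨j, hj⟩ : x.1.2 ∈ Set.range (C.orderEmbOfFin rfl) := by
    rwa [Finset.range_orderEmbOfFin]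
  exact ⟨(i, j), Subtype.ext (Prod.ext hi hj)⟩

theorem exists_gridEmbedding [Finite α] [Finite β] (hM : AvoidsCorner M) (hK : EightOnesClosed M)
    {v : {u : α × β // M u.1 u.2 = true}} (hv : ∃ w, (rectangleGraph M).Adj v w) :
    ∃ p q, 2 ≤ p ∧ 2 ≤ q ∧ ∃ φ : gridGraph p q ↪g rectangleGraph M,
      ∀ x, (rectangleGraph M).Reachable v x → x ∈ Set.range φ := by
  obtain ⟨w, hw⟩ := hv
  let S := {x | (rectangleGraph M).Reachable v x}
  let R := (Set.toFinite ((fun x => x.1.1) '' S)).toFinset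
  let C := (Set.toFinite ((fun x => x.1.2) '' S)).toFinset
  have hR : ∀ x ∈ S, x.1.1 ∈ R := fun x hx => (Set.Finite.mem_toFinset _).mpr ⟨x, hx, rfl⟩
  have hC : ∀ x ∈ S, x.1.2 ∈ C := fun x hx => (Set.Finite.mem_toFinset _).mpr ⟨x, hx, rfl⟩
  have hblock : ∀ r ∈ R, ∀ c ∈ C, M r c = true := by
    intro r hr c hc
    obtain ⟨x, hx, rfl⟩ := (Set.Finite.mem_toFinset _).mp hr
    obtain ⟨y, hy, rfl⟩ := (Set.Finite.mem_toFinset _).mp hc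
    exact (onesRect_of_reachable hM hK (hx.symm.trans hy)).1
  refine ⟨R.card, C.card, ?_, ?_, gridEmbedding R C hblock,
    fun x hx => mem_range_gridEmbedding (hR x hx) (hC x hx)⟩
  · exact Finset.one_lt_card.mpr ⟨_, hR v .rfl, _, hR w hw.reachable, hw.1.fst_ne⟩
  · exact Finset.one_lt_card.mpr ⟨_, hC v .rfl, _, hC w hw.reachable, hw.1.snd_ne⟩

end rectangleGraph

end RectangleGraph

/-- let `M` be a 0-1 matrix avoiding the 2×2 pattern `[[1,1],[1,0]]`,
such that every 3×3 submatrix with at least eight `1`s is all `1`s.  Let `H` be the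
graph whose vertices are the positions of `1`s in `M`, with `(a,d) ~ (c,b)` iff
`a < c`, `b < d`, and `M_{a,b} = M_{a,d} = M_{c,b} = M_{c,d} = 1`.  Then every
connected component of `H` is an isolated vertex or is isomorphic to `G(p,q)` with its
isolated vertices removed, for some `p, q ≥ 2`. -/
theorem stmt16 (m n : ℕ) (M : Fin m → Fin n → Bool)
    (havoid : ¬ ∃ (r r' : Fin m) (c c' : Fin n), r < r' ∧ c < c' ∧
        M r c = true ∧ M r c' = true ∧ M r' c = true ∧ M r' c' = false)
    (hK33 : ∀ (r : Fin 3 → Fin m) (c : Fin 3 → Fin n), StrictMono r → StrictMono c →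
      ∀ p q : Fin 3, (∀ p' q' : Fin 3, (p', q') ≠ (p, q) → M (r p') (c q') = true) →
        M (r p) (c q) = true)
    (H : SimpleGraph {p : Fin m × Fin n // M p.1 p.2 = true})
    (hH : ∀ u v, H.Adj u v ↔
      ((u.1.1 < v.1.1 ∧ v.1.2 < u.1.2 ∧
          M u.1.1 v.1.2 = true ∧ M v.1.1 u.1.2 = true) ∨
       (v.1.1 < u.1.1 ∧ u.1.2 < v.1.2 ∧
          M v.1.1 u.1.2 = true ∧ M u.1.1 v.1.2 = true))) :
    ∀ v, (∀ w, ¬ H.Adj v w) ∨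
      ∃ p q : ℕ, 2 ≤ p ∧ 2 ≤ q ∧
        Nonempty ((H.induce {w | H.Reachable v w}) ≃g
          ((gridGraph p q).induce {u | ∃ w, (gridGraph p q).Adj u w})) := by
  have hM : AvoidsCorner M := fun r r' c c' hr hc h₁ h₂ h₃ =>
    Bool.not_eq_false _ ▸ fun h => havoid ⟨r, r', c, c', hr, hc, h₁, h₂, h₃, h⟩
  obtain rfl : H = rectangleGraph M := by
    ext u v
    rw [hH]
    simp only [rectangleGraph, AntidiagPair, OnesRect]
    tauto
  intro v
  by_cases hv : ∃ w, (rectangleGraph M).Adj v w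
  · obtain ⟨p, q, hp, hq, φ, hφ⟩ := rectangleGraph.exists_gridEmbedding hM hK33 hv
    refine Or.inr ⟨p, q, hp, hq, ⟨?_⟩⟩
    rw [φ.setOf_reachable_eq_image (fun _ _ => gridGraph_reachable) hv hφ]
    exact (φ.induceImage _).symm
  · exact Or.inl fun w hw => hv ⟨w, hw⟩
end
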